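/- arXiv:1812.11472 — 5 statements merged into one kernel-verified Lean document; each statement's English description precedes it below -/
import Mathlib

section
/- Let M be a matroid of rank k on a finite set S and suppose the matroid polytope Δ_M has dimension |S| − q, so that (by the decomposition theorem) there are a partition (J_1,…,J_q) of S and matroids M_i of rank k_i on J_i with k_1+…+k_q = k, Δ_M = Δ_{M_1} × … × Δ_{M_q} inside ℝ^{J_1} × … × ℝ^{J_q} = ℝ^S, and dim Δ_{M_i} = |J_i| − 1 for each i. If Δ_M is a simple polytope, then for each i = 1,…,q one has Δ_{M_i} = Δ_{J_i,k_i} (the full hypersimplex, i.e. the convex hull of all δ_B with B ⊆ J_i, |B| = k_i) and k_i ∈ {0, 1, |J_i|−1, |J_i|}. In particular, a simple matroid polytope is a product of simplices. -/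
open Finset Module

/-- The 0-1 indicator vector `δ_B ∈ ℝ^S` of a finite subset `B` of `S`. -/
def delta {S : Type} [DecidableEq S] (B : Finset S) : S → ℝ := fun i => if i ∈ B then 1 else 0

/-- A matroid of rank `k` on `S`, given by its collection of bases: a nonempty collection of
`k`-element subsets satisfying the exchange property. -/
def IsMatroid {S : Type} [DecidableEq S] (k : ℕ) (M : Finset (Finset S)) : Prop :=
  M.Nonempty ∧ (∀ I ∈ M, I.card = k) ∧
    ∀ I ∈ M, ∀ J ∈ M, I ≠ J → ∀ i ∈ I \ J, ∃ j ∈ J \ I, insert j (I.erase i) ∈ M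

/-- The matroid polytope: the convex hull of the indicator vectors of the members of `M`. -/
def matroidPolytope {S : Type} [DecidableEq S] (M : Finset (Finset S)) : Set (S → ℝ) :=
  convexHull ℝ (delta '' (M : Set (Finset S)))

/-- The hypersimplex `Δ_{S,k}`: the convex hull of all `δ_B` with `|B| = k`. -/
def hypersimplex (S : Type) [DecidableEq S] (k : ℕ) : Set (S → ℝ) :=
  convexHull ℝ (delta '' {B : Finset S | B.card = k})

/-- `E` is an edge (a one-dimensional face) of the polytope `P`. -/
def IsEdgeOf {S : Type} (P E : Set (S → ℝ)) : Prop :=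
  IsExposed ℝ P E ∧ Module.finrank ℝ (affineSpan ℝ E).direction = 1

/-- The dimension of a polytope: the dimension of its affine span. -/
noncomputable def polyDim {S : Type} (P : Set (S → ℝ)) : ℕ :=
  Module.finrank ℝ (affineSpan ℝ P).direction

/-- A polytope `P` of dimension `d` is simple at a vertex `v` if `v` lies on exactly `d` edges. -/
def IsSimpleAt {S : Type} (P : Set (S → ℝ)) (v : S → ℝ) : Prop :=
  {E : Set (S → ℝ) | IsEdgeOf P E ∧ v ∈ E}.ncard = polyDim P

/-- A polytope is simple if it is simple at every vertex. -/
def IsSimplePolytope {S : Type} (P : Set (S → ℝ)) : Prop :=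
  ∀ v ∈ Set.extremePoints ℝ P, IsSimpleAt P v

/-- The hypersimplex `Δ_{J,k}` on the subset `J` of `S`, viewed inside `ℝ^S`:
the convex hull of all `δ_B` with `B ⊆ J`, `|B| = k`. -/
def hypersimplexOn {S : Type} [DecidableEq S] (J : Finset S) (k : ℕ) : Set (S → ℝ) :=
  convexHull ℝ (delta '' {B : Finset S | B ⊆ J ∧ B.card = k})


/-! At a vertex `δ_B` of a matroid polytope each exchange pair `(a, b)` (with `B - a + b` a
basis) spans an edge, and the directions `δ_b - δ_a` of these edges span the polytope; so a
simple vertex has exactly `dim Δ_M` exchange pairs. The exchange pairs of a basis of the product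
include those of its blocks, so every vertex of every factor `Δ_{M_i}` has exactly
`|J_i| - 1` exchange pairs. Then the exchange graph of a basis `B` of `M_i` has independent edge
directions, hence no four-cycle; it has no path with three edges, since `B - a + b` would then
have more exchange pairs than `B`; and no component of it misses part of `J_i`, since its
directions would then span too little. So it is a spanning star: `B` is a singleton or the
complement of one in `J_i`, and every such set is a basis. -/

theorem Finset.card_inter_lt_of_ne {α : Type*} [DecidableEq α] {k : ℕ} {C I : Finset α}
    (hC : C.card = k) (hI : I.card = k) (hCI : C ≠ I) : (C ∩ I).card < k := by
  refine lt_of_le_of_ne (hC ▸ card_le_card inter_subset_left) fun h => hCI ?_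
  have hCsub : C ⊆ I := inter_eq_left.1 (eq_of_subset_of_card_le inter_subset_left (by omega))
  exact eq_of_subset_of_card_le hCsub (by omega)

theorem Finset.eq_of_subset_of_card_le_one {α : Type*} {B C J : Finset α} (hB : B ⊆ J)
    (hC : C ⊆ J) (hJ : J.card ≤ 1) (h : B.card = C.card) : B = C := by
  rcases Nat.le_one_iff_eq_zero_or_eq_one.1 ((card_le_card hB).trans hJ) with h0 | h1
  · rw [card_eq_zero.1 h0, card_eq_zero.1 (h ▸ h0 : C.card = 0)]
  · rw [eq_of_subset_of_card_le hB (by omega), eq_of_subset_of_card_le hC (by omega)]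

theorem Finset.insert_erase_inj_of_mem_of_notMem {α : Type*} [DecidableEq α] {B : Finset α}
    {a b a' b' : α} (ha : a ∈ B) (hb : b ∉ B)
    (h : insert b (B.erase a) = insert b' (B.erase a')) : a = a' ∧ b = b' := by
  have hmem := Finset.ext_iff.1 h
  constructor
  · by_contra hne
    have := hmem a
    simp only [mem_insert, mem_erase] at this
    grind
  · have := hmem b
    simp only [mem_insert, mem_erase] at this
    grind

theorem Finset.insert_erase_insert_erase_comm {α : Type*} [DecidableEq α] {B : Finset α}
    {a b c : α} (ha : a ∈ B) (hb : b ∉ B) (hc : c ∈ B) (hac : a ≠ c) :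
    insert a ((insert b (B.erase a)).erase c) = insert b (B.erase c) := by
  ext z
  simp only [mem_insert, mem_erase]
  grind

theorem Finset.eq_tsub_one_of_sum_add_card_le {ι : Type*} [Fintype ι] {x c : ι → ℕ}
    (hle : ∀ i, c i - 1 ≤ x i) (hsum : ∑ i, x i + Fintype.card ι ≤ ∑ i, c i) (i : ι) :
    x i = c i - 1 := by
  have h1 : ∑ i, c i ≤ ∑ i, (c i - 1) + Fintype.card ι := by
    rw [← card_univ, card_eq_sum_ones, ← sum_add_distrib]
    exact sum_le_sum fun i _ => by omega
  have h2 : ∑ i, (c i - 1) = ∑ i, x i := le_antisymm (sum_le_sum fun i _ => hle i) (by omega)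
  exact ((sum_eq_sum_iff_of_le fun i _ => hle i).1 h2 i (mem_univ i)).symm

theorem finrank_span_image_le_card {ι E : Type*} [AddCommGroup E] [Module ℝ E] (f : ι → E)
    (s : Finset ι) : finrank ℝ (Submodule.span ℝ (f '' s)) ≤ s.card := by
  classical
  rw [← coe_image]
  exact (finrank_span_finset_le_card _).trans card_image_le

section ConvexHull

variable {E : Type*} [AddCommGroup E] [Module ℝ E] [TopologicalSpace E] [IsTopologicalAddGroup E]
  [ContinuousSMul ℝ E] [LocallyConvexSpace ℝ E] [T2Space E] {V F : Set E}

/-- By Krein–Milman, an exposed face is the hull of its extreme points, which are vertices. -/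
theorem IsExposed.eq_convexHull_inter (hV : V.Finite) (hF : IsExposed ℝ (convexHull ℝ V) F) :
    F = convexHull ℝ (F ∩ V) := by
  have hFconv : Convex ℝ F := hF.convex (convex_convexHull ℝ V)
  refine subset_antisymm ?_ (convexHull_min Set.inter_subset_left hFconv)
  calc F = closure (convexHull ℝ (F.extremePoints ℝ)) :=
        (closure_convexHull_extremePoints (hF.isCompact (hV.isCompact_convexHull ℝ)) hFconv).symm
    _ ⊆ closure (convexHull ℝ (F ∩ V)) := closure_mono <| convexHull_mono fun x hx =>
        ⟨hx.1, extremePoints_convexHull_subset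
          (hF.isExtreme.extremePoints_subset_extremePoints hx)⟩
    _ = convexHull ℝ (F ∩ V) :=
        ((hV.subset Set.inter_subset_right).isClosed_convexHull ℝ).closure_eq

theorem Set.Finite.finite_setOf_isExposed_convexHull (hV : V.Finite) :
    {F | IsExposed ℝ (convexHull ℝ V) F}.Finite :=
  (hV.finite_subsets.image (convexHull ℝ)).subset fun F hF =>
    ⟨F ∩ V, Set.inter_subset_right, (hF.eq_convexHull_inter hV).symm⟩

theorem convexHull_maximizers (hV : V.Finite) (l : StrongDual ℝ E) :
    {x ∈ convexHull ℝ V | ∀ y ∈ convexHull ℝ V, l y ≤ l x} =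
      convexHull ℝ {v ∈ V | ∀ w ∈ V, l w ≤ l v} := by
  have hF : IsExposed ℝ (convexHull ℝ V)
      {x ∈ convexHull ℝ V | ∀ y ∈ convexHull ℝ V, l y ≤ l x} := fun _ => ⟨l, rfl⟩
  rw [hF.eq_convexHull_inter hV]
  congr 1
  ext v
  exact ⟨fun ⟨⟨_, hmax⟩, hv⟩ => ⟨hv, fun w hw => hmax w (subset_convexHull ℝ V hw)⟩,
    fun ⟨hv, hmax⟩ => ⟨⟨subset_convexHull ℝ V hv, fun y hy =>
      convexHull_min hmax (convex_halfSpace_le l.isLinear (l v)) hy⟩, hv⟩⟩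

end ConvexHull

section Delta

variable {S : Type} [DecidableEq S]

theorem delta_injective : Function.Injective (delta : Finset S → S → ℝ) := by
  intro B C h
  ext s
  have := congrFun h s
  unfold delta at this
  split_ifs at this <;> simp_all

theorem delta_mem_Icc (B : Finset S) : delta B ∈ Set.Icc 0 1 := by
  constructor <;> intro s <;> unfold delta <;> split_ifs <;> norm_num

theorem delta_mem_extremePoints_Icc (B : Finset S) :
    delta B ∈ (Set.Icc (0 : S → ℝ) 1).extremePoints ℝ := by
  rw [← Set.pi_univ_Icc, extremePoints_pi]
  intro s _
  simp only [Pi.zero_apply, Pi.one_apply, Set.extremePoints_Icc zero_le_one]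
  unfold delta
  split_ifs <;> simp

theorem sum_delta_mul_delta [Fintype S] (A B : Finset S) :
    ∑ s, delta A s * delta B s = (A ∩ B).card := by
  simp [delta, ← ite_and, Finset.sum_boole, Finset.filter_and, and_comm]

theorem delta_sub_delta_insert_erase {C : Finset S} {a b : S} (ha : a ∈ C) (hb : b ∉ C) :
    delta C - delta (insert b (C.erase a)) = delta {a} - delta {b} := by
  funext s
  simp only [delta, Pi.sub_apply, mem_insert, mem_erase, mem_singleton]
  split_ifs <;> grind

variable {M : Finset (Finset S)}

theorem matroidPolytope_subset_Icc : matroidPolytope M ⊆ Set.Icc 0 1 :=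
  convexHull_min (Set.image_subset_iff.2 fun B _ => delta_mem_Icc B) (convex_Icc 0 1)

theorem delta_mem_matroidPolytope {I : Finset S} (hI : I ∈ M) : delta I ∈ matroidPolytope M :=
  subset_convexHull ℝ _ ⟨I, hI, rfl⟩

theorem delta_mem_extremePoints {I : Finset S} (h : delta I ∈ matroidPolytope M) :
    delta I ∈ (matroidPolytope M).extremePoints ℝ :=
  inter_extremePoints_subset_extremePoints_of_subset matroidPolytope_subset_Icc
    ⟨h, delta_mem_extremePoints_Icc I⟩

theorem mem_of_delta_mem_matroidPolytope {I : Finset S} (h : delta I ∈ matroidPolytope M) :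
    I ∈ M := by
  obtain ⟨C, hC, hCI⟩ := extremePoints_convexHull_subset (delta_mem_extremePoints h)
  exact delta_injective hCI ▸ hC

end Delta

section Edges

variable {S : Type} [Fintype S] [DecidableEq S] {M : Finset (Finset S)} {k : ℕ}

/-- On `k`-sets, `x ↦ ⟨δ_I + δ_I', x⟩` is maximised exactly at `I` and `I'`. -/
theorem isEdgeOf_matroidPolytope_pair (hM : ∀ C ∈ M, C.card = k) {I I' : Finset S}
    (hI : I ∈ M) (hI' : I' ∈ M) (hII' : (I ∩ I').card + 1 = k) :
    IsEdgeOf (matroidPolytope M) (matroidPolytope {I, I'}) := by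
  have hne : I ≠ I' := fun h => by simp [h, hM I' hI'] at hII'
  set l : StrongDual ℝ (S → ℝ) :=
    ∑ s, (delta I s + delta I' s) • ContinuousLinearMap.proj s
  have hl : ∀ C, l (delta C) = (I ∩ C).card + (I' ∩ C).card := fun C => by
    simp [l, add_mul, sum_add_distrib, sum_delta_mul_delta]
  have hlt : ∀ C ∈ M, C ≠ I → C ≠ I' → l (delta C) < l (delta I) := fun C hC h h' => by
    have h1 := card_inter_lt_of_ne (hM C hC) (hM I hI) h
    have h2 := card_inter_lt_of_ne (hM C hC) (hM I' hI') h'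
    rw [hl, hl, inter_self, hM I hI, inter_comm I C, inter_comm I' C, inter_comm I' I]
    exact_mod_cast (by omega : (C ∩ I).card + (C ∩ I').card < k + (I ∩ I').card)
  have hlI' : l (delta I') = l (delta I) := by
    rw [hl, hl, inter_self, inter_self, hM I hI, hM I' hI', inter_comm, add_comm]
  have hle : ∀ C ∈ M, l (delta C) ≤ l (delta I) := fun C hC => by
    rcases eq_or_ne C I with rfl | h
    · rfl
    rcases eq_or_ne C I' with rfl | h'
    · exact hlI'.le
    exact (hlt C hC h h').le
  refine ⟨fun _ => ⟨l, ?_⟩, ?_⟩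
  · rw [matroidPolytope, matroidPolytope, convexHull_maximizers (M.finite_toSet.image _)]
    congr 1
    ext v
    simp only [coe_insert, coe_singleton, Set.image_pair, Set.mem_insert_iff,
      Set.mem_singleton_iff, Set.mem_ofPred_eq, Set.mem_image, mem_coe, forall_exists_index,
      and_imp, forall_apply_eq_imp_iff₂]
    constructor
    · rintro (rfl | rfl)
      · exact ⟨⟨I, hI, rfl⟩, hle⟩
      · exact ⟨⟨I', hI', rfl⟩, hlI' ▸ hle⟩
    · rintro ⟨⟨C, hC, rfl⟩, hmax⟩
      by_contra h
      exact (hlt C hC (fun e => h (.inl (e ▸ rfl))) (fun e => h (.inr (e ▸ rfl)))).not_ge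
        (hmax I hI)
  · rw [matroidPolytope, affineSpan_convexHull, direction_affineSpan, coe_insert, coe_singleton,
      Set.image_pair, vectorSpan_pair, finrank_span_singleton]
    exact vsub_ne_zero.2 (delta_injective.ne hne)

end Edges

section Exchange

variable {S : Type} [Fintype S] [DecidableEq S] {N : Finset (Finset S)} {B : Finset S} {k : ℕ}

def exchangePairs (N : Finset (Finset S)) (B : Finset S) : Finset (S × S) :=
  (B ×ˢ Bᶜ).filter fun p => insert p.2 (B.erase p.1) ∈ N

theorem mem_exchangePairs {p : S × S} :
    p ∈ exchangePairs N B ↔ p.1 ∈ B ∧ p.2 ∉ B ∧ insert p.2 (B.erase p.1) ∈ N := by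
  simp [exchangePairs, and_assoc]

theorem card_exchangePairs_le_polyDim (hM : ∀ C ∈ N, C.card = k) (hB : B ∈ N)
    (hsimple : IsSimpleAt (matroidPolytope N) (delta B)) :
    (exchangePairs N B).card ≤ polyDim (matroidPolytope N) := by
  set edge : S × S → Set (S → ℝ) := fun p => matroidPolytope {B, insert p.2 (B.erase p.1)}
  have hmaps : ∀ p ∈ exchangePairs N B,
      edge p ∈ {E | IsEdgeOf (matroidPolytope N) E ∧ delta B ∈ E} := fun p hp => by
    obtain ⟨ha, hb, hB'⟩ := mem_exchangePairs.1 hp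
    refine ⟨isEdgeOf_matroidPolytope_pair hM hB hB' ?_,
      delta_mem_matroidPolytope (mem_insert_self _ _)⟩
    rw [inter_insert_of_notMem hb, inter_erase, inter_self, card_erase_of_mem ha, ← hM B hB,
      Nat.sub_add_cancel (card_pos.2 ⟨_, ha⟩)]
  have hinj : Set.InjOn edge (exchangePairs N B) := fun p hp p' hp' h => by
    obtain ⟨ha, hb, -⟩ := mem_exchangePairs.1 hp
    obtain ⟨-, hb', -⟩ := mem_exchangePairs.1 hp'
    have hmem : delta (insert p'.2 (B.erase p'.1)) ∈ edge p := by
      rw [h]; exact delta_mem_matroidPolytope (mem_insert_of_mem (mem_singleton_self _))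
    rcases mem_insert.1 (mem_of_delta_mem_matroidPolytope hmem) with h' | h'
    · exact absurd (h' ▸ mem_insert_self _ _) hb'
    · obtain ⟨h1, h2⟩ := insert_erase_inj_of_mem_of_notMem ha hb (mem_singleton.1 h').symm
      exact Prod.ext h1 h2
  have hfin : {E | IsEdgeOf (matroidPolytope N) E ∧ delta B ∈ E}.Finite :=
    ((N.finite_toSet.image delta).finite_setOf_isExposed_convexHull).subset fun E hE => hE.1.1
  calc (exchangePairs N B).card = (edge '' exchangePairs N B).ncard :=
        (Set.ncard_coe_finset _).symm.trans hinj.ncard_image.symm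
    _ ≤ _ := Set.ncard_le_ncard (by rintro _ ⟨p, hp, rfl⟩; exact hmaps p hp) hfin
    _ = polyDim (matroidPolytope N) := hsimple

end Exchange

theorem Matroid.IsBase.exists_symm_exchange {α : Type*} {M : Matroid α} {A B : Set α} {a : α}
    (hA : M.IsBase A) (hB : M.IsBase B) (ha : a ∈ A \ B) :
    ∃ b ∈ B \ A, M.IsBase (insert b A \ {a}) ∧ M.IsBase (insert a B \ {b}) := by
  have haE : a ∈ M.E := hA.subset_ground ha.1
  obtain ⟨b, ⟨hbC, hbK⟩, hba⟩ :=
    ((hB.fundCircuit_isCircuit haE ha.2).isCocircuit_inter_nontrivial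
      (M.fundCocircuit_isCocircuit ha.1 hA)
      ⟨a, M.mem_fundCircuit a B, M.mem_fundCocircuit a A⟩).exists_ne a
  have hbB : b ∈ B := (M.fundCircuit_subset_insert a B hbC).resolve_left hba
  have hbA : b ∉ A := ((M.fundCocircuit_subset_insert_compl a A hbK).resolve_left hba).2
  refine ⟨b, ⟨hbB, hbA⟩, ?_, ?_⟩
  · have haC : a ∈ M.fundCircuit b A := hA.mem_fundCocircuit_iff_mem_fundCircuit.1 hbK
    rw [hA.indep.mem_fundCircuit_iff (by rw [hA.closure_eq]; exact hB.subset_ground hbB) hbA] at haC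
    exact hA.exchange_isBase_of_indep' ha.1 hbA haC
  · rw [hB.indep.mem_fundCircuit_iff (by rw [hB.closure_eq]; exact haE) ha.2] at hbC
    exact hB.exchange_isBase_of_indep' hbB ha.2 hbC

namespace IsMatroid

variable {S : Type} [Fintype S] [DecidableEq S] {N : Finset (Finset S)} {k : ℕ}

def toMatroid (hN : IsMatroid k N) : Matroid S :=
  Matroid.ofIsBaseOfFinite Set.finite_univ (fun X => ∃ C ∈ N, (C : Set S) = X)
    (let ⟨C, hC⟩ := hN.1; ⟨C, C, hC, rfl⟩)
    (by
      rintro _ _ ⟨C, hC, rfl⟩ ⟨D, hD, rfl⟩ a ⟨haC, haD⟩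
      obtain ⟨b, hb, hbN⟩ :=
        hN.2.2 C hC D hD (by rintro rfl; exact haD haC) a (mem_sdiff.2 ⟨haC, haD⟩)
      exact ⟨b, by simpa using hb, _, hbN, by simp⟩)
    (fun _ _ => Set.subset_univ _)

theorem isBase_toMatroid (hN : IsMatroid k N) {C : Finset S} : hN.toMatroid.IsBase C ↔ C ∈ N :=
  show (∃ D ∈ N, (D : Set S) = C) ↔ C ∈ N by simp only [coe_inj, exists_eq_right]

theorem exists_symm_exchange (hN : IsMatroid k N) {A B : Finset S} (hA : A ∈ N) (hB : B ∈ N)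
    {a : S} (haA : a ∈ A) (haB : a ∉ B) :
    ∃ b ∈ B, b ∉ A ∧ insert b (A.erase a) ∈ N ∧ insert a (B.erase b) ∈ N := by
  obtain ⟨b, ⟨hbB, hbA⟩, h1, h2⟩ := ((isBase_toMatroid hN).2 hA).exists_symm_exchange
    ((isBase_toMatroid hN).2 hB) (show a ∈ (A : Set S) \ B from ⟨haA, haB⟩)
  refine ⟨b, hbB, hbA, (isBase_toMatroid hN).1 ?_, (isBase_toMatroid hN).1 ?_⟩
  · rwa [coe_insert, coe_erase,
      Set.insert_sdiff_singleton_comm (ne_of_mem_of_not_mem haA hbA).symm]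
  · rwa [coe_insert, coe_erase,
      Set.insert_sdiff_singleton_comm (ne_of_mem_of_not_mem hbB haB).symm]

end IsMatroid

section ExchangeDirections

variable {S : Type} [Fintype S] [DecidableEq S] {N : Finset (Finset S)} {B : Finset S} {k : ℕ}

def exchangeDir (p : S × S) : S → ℝ := delta {p.2} - delta {p.1}

/-- Symmetric exchange with `B` removes one element of `C \ B` at the cost of one exchange
direction at `B`. -/
theorem vectorSpan_le_span_exchangeDir (hN : IsMatroid k N) (hB : B ∈ N) :
    vectorSpan ℝ (delta '' (N : Set (Finset S))) ≤
      Submodule.span ℝ (exchangeDir '' (exchangePairs N B : Set (S × S))) := by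
  set W := Submodule.span ℝ (exchangeDir '' (exchangePairs N B : Set (S × S)))
  suffices h : ∀ n, ∀ C ∈ N, (C \ B).card = n → delta C - delta B ∈ W by
    rw [vectorSpan_eq_span_vsub_set_right ℝ (Set.mem_image_of_mem delta hB), Submodule.span_le]
    rintro _ ⟨_, ⟨C, hC, rfl⟩, rfl⟩
    exact h _ C hC rfl
  intro n
  induction n with
  | zero =>
    intro C hC hn
    have hCB : C ⊆ B := sdiff_eq_empty_iff_subset.1 (card_eq_zero.1 hn)
    rw [eq_of_subset_of_card_le hCB (by rw [hN.2.1 C hC, hN.2.1 B hB]), sub_self]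
    exact W.zero_mem
  | succ n ih =>
    intro C hC hn
    obtain ⟨x, hx⟩ := card_pos.1 (by omega : 0 < (C \ B).card)
    obtain ⟨hxC, hxB⟩ := mem_sdiff.1 hx
    obtain ⟨b, hbB, hbC, hC', hB'⟩ := hN.exists_symm_exchange hC hB hxC hxB
    have hstep : delta C - delta (insert b (C.erase x)) ∈ W := by
      rw [delta_sub_delta_insert_erase hxC hbC]
      exact Submodule.subset_span ⟨(b, x), mem_exchangePairs.2 ⟨hbB, hxB, hB'⟩, rfl⟩
    have hrec := ih _ hC' (by
      rw [insert_sdiff_of_mem _ hbB, erase_sdiff_comm, card_erase_of_mem hx, hn,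
        Nat.add_sub_cancel])
    simpa using W.add_mem hstep hrec

theorem polyDim_le_finrank_span_exchangeDir (hN : IsMatroid k N) (hB : B ∈ N) :
    polyDim (matroidPolytope N) ≤
      finrank ℝ (Submodule.span ℝ (exchangeDir '' (exchangePairs N B : Set (S × S)))) := by
  rw [polyDim, matroidPolytope, affineSpan_convexHull, direction_affineSpan]
  exact Submodule.finrank_mono (vectorSpan_le_span_exchangeDir hN hB)

theorem polyDim_le_card_exchangePairs (hN : IsMatroid k N) (hB : B ∈ N) :
    polyDim (matroidPolytope N) ≤ (exchangePairs N B).card :=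
  (polyDim_le_finrank_span_exchangeDir hN hB).trans (finrank_span_image_le_card _ _)

theorem exchangeDir_notMem_span_erase (hN : IsMatroid k N) (hB : B ∈ N)
    (hcard : (exchangePairs N B).card = polyDim (matroidPolytope N)) {p : S × S}
    (hp : p ∈ exchangePairs N B) :
    exchangeDir p ∉
      Submodule.span ℝ (exchangeDir '' ((exchangePairs N B).erase p : Set (S × S))) := by
  intro hmem
  have hspan : Submodule.span ℝ (exchangeDir '' (exchangePairs N B : Set (S × S))) =
      Submodule.span ℝ (exchangeDir '' ((exchangePairs N B).erase p : Set (S × S))) := by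
    rw [← insert_erase hp, coe_insert, Set.image_insert_eq, Submodule.span_insert_eq_span hmem,
      erase_insert (notMem_erase p _)]
  have h := polyDim_le_finrank_span_exchangeDir hN hB
  rw [hspan] at h
  have := (finrank_span_image_le_card exchangeDir _).trans_eq (card_erase_of_mem hp)
  have := card_pos.2 ⟨p, hp⟩
  omega

end ExchangeDirections

section ExchangeGraph

variable {S : Type} [Fintype S] [DecidableEq S] {N : Finset (Finset S)} {B : Finset S} {k : ℕ}

theorem not_four_cycle (hN : IsMatroid k N) (hB : B ∈ N)
    (hcard : (exchangePairs N B).card = polyDim (matroidPolytope N)) {a b c d : S}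
    (hac : a ≠ c) (hbd : b ≠ d) (hab : (a, b) ∈ exchangePairs N B)
    (had : (a, d) ∈ exchangePairs N B) (hcb : (c, b) ∈ exchangePairs N B)
    (hcd : (c, d) ∈ exchangePairs N B) : False := by
  refine exchangeDir_notMem_span_erase hN hB hcard hcd ?_
  have hsum :
      exchangeDir (c, d) = exchangeDir (c, b) + exchangeDir (a, d) - exchangeDir (a, b) := by
    simp only [exchangeDir]
    abel
  have hmem : ∀ p ∈ exchangePairs N B, p ≠ (c, d) → exchangeDir p ∈
      Submodule.span ℝ (exchangeDir '' ((exchangePairs N B).erase (c, d) : Set (S × S))) :=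
    fun p hp hne => Submodule.subset_span ⟨p, mem_erase.2 ⟨hne, hp⟩, rfl⟩
  rw [hsum]
  exact sub_mem (add_mem (hmem _ hcb (by simp [hbd])) (hmem _ had (by simp [hac])))
    (hmem _ hab (by simp [hac]))

/-- Symmetric exchange of `c` between `B - a + b` and `B - c + d` either gives the claim or
closes a four-cycle `a b c d`. -/
theorem insert_insert_erase_erase_mem (hN : IsMatroid k N) (hB : B ∈ N)
    (hcard : (exchangePairs N B).card = polyDim (matroidPolytope N)) {a b c d : S}
    (hac : a ≠ c) (hbd : b ≠ d) (hab : (a, b) ∈ exchangePairs N B)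
    (hcd : (c, d) ∈ exchangePairs N B) :
    insert d (insert b ((B.erase a).erase c)) ∈ N := by
  obtain ⟨haB, hbB, hX⟩ := mem_exchangePairs.1 hab
  obtain ⟨hcB, hdB, hY⟩ := mem_exchangePairs.1 hcd
  have hcb : c ≠ b := ne_of_mem_of_not_mem hcB hbB
  obtain ⟨j, hjY, hjX, hXj, hYj⟩ := hN.exists_symm_exchange hX hY
    (mem_insert_of_mem (mem_erase.2 ⟨hac.symm, hcB⟩)) (by simp [ne_of_mem_of_not_mem hcB hdB])
  rcases mem_insert.1 hjY with rfl | hj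
  · rwa [erase_insert_of_ne hcb.symm] at hXj
  obtain rfl : j = a := by
    by_contra h
    exact hjX (mem_insert_of_mem (mem_erase.2 ⟨h, mem_of_mem_erase hj⟩))
  rw [insert_erase_insert_erase_comm haB hbB hcB hac] at hXj
  rw [insert_erase_insert_erase_comm hcB hdB haB hac.symm] at hYj
  exact (not_four_cycle hN hB hcard hac hbd hab (mem_exchangePairs.2 ⟨haB, hdB, hYj⟩)
    (mem_exchangePairs.2 ⟨hcB, hbB, hXj⟩) hcd).elim

theorem swap_mem_exchangePairs (hN : IsMatroid k N) (hB : B ∈ N)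
    (hcard : (exchangePairs N B).card = polyDim (matroidPolytope N)) {a b x y : S}
    (hab : (a, b) ∈ exchangePairs N B) (hxy : (x, y) ∈ exchangePairs N B) :
    (Equiv.swap a b x, Equiv.swap a b y) ∈ exchangePairs N (insert b (B.erase a)) := by
  obtain ⟨haB, hbB, hB'⟩ := mem_exchangePairs.1 hab
  obtain ⟨hxB, hyB, hxyN⟩ := mem_exchangePairs.1 hxy
  have hab' : a ≠ b := ne_of_mem_of_not_mem haB hbB
  have hxb : x ≠ b := ne_of_mem_of_not_mem hxB hbB
  have hya : y ≠ a := (ne_of_mem_of_not_mem haB hyB).symm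
  have hbB' : b ∉ B.erase a := fun h => hbB (mem_of_mem_erase h)
  rcases eq_or_ne x a with rfl | hxa <;> rcases eq_or_ne y b with rfl | hyb
  · rw [Equiv.swap_apply_left, Equiv.swap_apply_right]
    refine mem_exchangePairs.2 ⟨mem_insert_self _ _, by simp [hab'], ?_⟩
    rwa [erase_insert hbB', insert_erase haB]
  · rw [Equiv.swap_apply_left, Equiv.swap_apply_of_ne_of_ne hya hyb]
    refine mem_exchangePairs.2 ⟨mem_insert_self _ _, by simp [hyb, hyB], ?_⟩
    rwa [erase_insert hbB']
  · rw [Equiv.swap_apply_of_ne_of_ne hxa hxb, Equiv.swap_apply_right]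
    refine mem_exchangePairs.2 ⟨by simp [hxa, hxB], by simp [hab'], ?_⟩
    rwa [insert_erase_insert_erase_comm haB hbB hxB hxa.symm]
  · rw [Equiv.swap_apply_of_ne_of_ne hxa hxb, Equiv.swap_apply_of_ne_of_ne hya hyb]
    refine mem_exchangePairs.2 ⟨by simp [hxa, hxB], by simp [hyb, hyB], ?_⟩
    rw [erase_insert_of_ne hxb.symm]
    exact insert_insert_erase_erase_mem hN hB hcard hxa.symm hyb.symm hab hxy

/-- A path `b' - a - b - c` at `B` would give `B - a + b` more exchange pairs than `B`:
the swapped pairs of `B`, and `(c, b')`. -/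
theorem not_path_three (hN : IsMatroid k N)
    (hcount : ∀ C ∈ N, (exchangePairs N C).card = polyDim (matroidPolytope N)) (hB : B ∈ N)
    {a b b' c : S} (hbb' : b ≠ b') (hac : a ≠ c) (hab : (a, b) ∈ exchangePairs N B)
    (hab' : (a, b') ∈ exchangePairs N B) (hcb : (c, b) ∈ exchangePairs N B) : False := by
  obtain ⟨haB, hbB, hB₁⟩ := mem_exchangePairs.1 hab
  obtain ⟨-, hb'B, -⟩ := mem_exchangePairs.1 hab'
  obtain ⟨hcB, -, -⟩ := mem_exchangePairs.1 hcb
  set σ := Equiv.swap a b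
  have hcb' : (c, b') ∈ exchangePairs N (insert b (B.erase a)) := by
    refine mem_exchangePairs.2 ⟨by simp [hac.symm, hcB], by simp [hbb'.symm, hb'B], ?_⟩
    rw [erase_insert_of_ne (ne_of_mem_of_not_mem hcB hbB).symm, Finset.insert_comm]
    exact insert_insert_erase_erase_mem hN hB (hcount B hB) hac hbb'.symm hab' hcb
  have hσ : Prod.map σ σ (c, b') = (c, b') := by
    simp only [Prod.map, σ, Equiv.swap_apply_of_ne_of_ne hac.symm (ne_of_mem_of_not_mem hcB hbB),
      Equiv.swap_apply_of_ne_of_ne (ne_of_mem_of_not_mem haB hb'B).symm hbb'.symm]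
  have hmaps : ∀ p ∈ exchangePairs N B,
      Prod.map σ σ p ∈ (exchangePairs N (insert b (B.erase a))).erase (c, b') := by
    intro p hp
    refine mem_erase.2 ⟨fun h => ?_, swap_mem_exchangePairs hN hB (hcount B hB) hab hp⟩
    obtain ⟨x, y⟩ := p
    obtain ⟨hx, hy⟩ := Prod.ext_iff.1 h
    rw [Prod.map_fst, Equiv.swap_apply_eq_iff] at hx
    rw [Prod.map_snd, Equiv.swap_apply_eq_iff] at hy
    rw [show (x, y) = Prod.map σ σ (c, b') from Prod.ext hx hy, hσ] at hp
    exact not_four_cycle hN hB (hcount B hB) hac hbb' hab hab' hcb hp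
  have hle := card_le_card_of_injOn _ hmaps (σ.injective.prodMap σ.injective).injOn
  rw [card_erase_of_mem hcb', hcount B hB, hcount _ hB₁] at hle
  have := card_pos.2 ⟨_, hcb'⟩
  rw [hcount _ hB₁] at this
  omega

end ExchangeGraph

section Classification

variable {S : Type} [Fintype S] [DecidableEq S] {N : Finset (Finset S)} {B J : Finset S} {k : ℕ}

theorem mem_of_mem_exchangePairs (hNJ : ∀ I ∈ N, I ⊆ J) (hB : B ∈ N) {p : S × S}
    (hp : p ∈ exchangePairs N B) : p.1 ∈ J ∧ p.2 ∈ J := by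
  obtain ⟨h1, -, h3⟩ := mem_exchangePairs.1 hp
  exact ⟨hNJ B hB h1, hNJ _ h3 (mem_insert_self _ _)⟩

/-- The exchange directions lie in the span of the `δ_s - δ_x`, `s ∈ J ∩ X`, and the
`δ_s - δ_y`, `s ∈ J \ X`. -/
theorem polyDim_le_card_sub_two (hN : IsMatroid k N) (hNJ : ∀ I ∈ N, I ⊆ J) (hB : B ∈ N)
    (X : Set S) (hX : ∀ p ∈ exchangePairs N B, p.1 ∈ X ↔ p.2 ∈ X) {x y : S} (hx : x ∈ J)
    (hxX : x ∈ X) (hy : y ∈ J) (hyX : y ∉ X) :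
    polyDim (matroidPolytope N) ≤ J.card - 2 := by
  classical
  set r : S → S := fun s => if s ∈ X then x else y
  set g : S → S → ℝ := fun s => delta {s} - delta {r s}
  set U := Submodule.span ℝ (g '' ((J.erase x).erase y : Finset S))
  have hxy : x ≠ y := fun h => hyX (h ▸ hxX)
  have hg : ∀ s ∈ J, g s ∈ U := by
    intro s hs
    by_cases hsx : s = x
    · simp [g, r, hsx, hxX]
    by_cases hsy : s = y
    · simp [g, r, hsy, hyX]
    exact Submodule.subset_span ⟨s, by simp [hsx, hsy, hs], rfl⟩
  have hle : Submodule.span ℝ (exchangeDir '' (exchangePairs N B : Set (S × S))) ≤ U := by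
    rw [Submodule.span_le]
    rintro _ ⟨p, hp, rfl⟩
    obtain ⟨hp1, hp2⟩ := mem_of_mem_exchangePairs hNJ hB hp
    have hr : r p.1 = r p.2 := by simp only [r, hX p hp]
    have hdir : exchangeDir p = g p.2 - g p.1 := by simp [exchangeDir, g, hr]
    rw [hdir]
    exact sub_mem (hg _ hp2) (hg _ hp1)
  calc polyDim (matroidPolytope N)
      ≤ finrank ℝ (Submodule.span ℝ (exchangeDir '' (exchangePairs N B : Set (S × S)))) :=
        polyDim_le_finrank_span_exchangeDir hN hB
    _ ≤ finrank ℝ U := Submodule.finrank_mono hle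
    _ ≤ ((J.erase x).erase y).card := finrank_span_image_le_card _ _
    _ = J.card - 2 := by
        rw [card_erase_of_mem (mem_erase.2 ⟨hxy.symm, hy⟩), card_erase_of_mem hx]
        rfl

def exchangeGraph (N : Finset (Finset S)) (B : Finset S) : SimpleGraph S :=
  SimpleGraph.fromRel fun x y => (x, y) ∈ exchangePairs N B

theorem exchangeGraph_adj {x y : S} :
    (exchangeGraph N B).Adj x y ↔
      x ≠ y ∧ ((x, y) ∈ exchangePairs N B ∨ (y, x) ∈ exchangePairs N B) :=
  SimpleGraph.fromRel_adj _ _ _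

theorem exchangeGraph_adj_of_mem {p : S × S} (hp : p ∈ exchangePairs N B) :
    (exchangeGraph N B).Adj p.1 p.2 :=
  exchangeGraph_adj.2
    ⟨ne_of_mem_of_not_mem (mem_exchangePairs.1 hp).1 (mem_exchangePairs.1 hp).2.1, .inl hp⟩

theorem mem_exchangePairs_of_adj_of_mem {x z : S} (h : (exchangeGraph N B).Adj z x) (hz : z ∈ B) :
    (z, x) ∈ exchangePairs N B :=
  (exchangeGraph_adj.1 h).2.resolve_right fun h' => (mem_exchangePairs.1 h').2.1 hz

theorem mem_exchangePairs_of_adj_of_notMem {x z : S} (h : (exchangeGraph N B).Adj z x)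
    (hz : z ∉ B) : (x, z) ∈ exchangePairs N B :=
  (exchangeGraph_adj.1 h).2.resolve_left fun h' => hz (mem_exchangePairs.1 h').1

theorem exchangeGraph_not_path_three (hN : IsMatroid k N)
    (hcount : ∀ C ∈ N, (exchangePairs N C).card = polyDim (matroidPolytope N)) (hB : B ∈ N)
    {a b b' c : S} (hab : (exchangeGraph N B).Adj a b) (hab' : (exchangeGraph N B).Adj a b')
    (hbc : (exchangeGraph N B).Adj b c) (hbb' : b ≠ b') (hac : a ≠ c) : False := by
  by_cases haB : a ∈ B
  · have h := mem_exchangePairs_of_adj_of_mem hab haB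
    exact not_path_three hN hcount hB hbb' hac h (mem_exchangePairs_of_adj_of_mem hab' haB)
      (mem_exchangePairs_of_adj_of_notMem hbc (mem_exchangePairs.1 h).2.1)
  · have h := mem_exchangePairs_of_adj_of_notMem hab haB
    exact not_path_three hN hcount hB hac hbb' h
      (mem_exchangePairs_of_adj_of_mem hbc (mem_exchangePairs.1 h).1)
      (mem_exchangePairs_of_adj_of_notMem hab' haB)

/-- The exchange graph has no path with three edges, so the component of an edge is a star; it
is all of `J` by `polyDim_le_card_sub_two`. -/
theorem exists_forall_adj (hN : IsMatroid k N) (hNJ : ∀ I ∈ N, I ⊆ J)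
    (hdim : polyDim (matroidPolytope N) = J.card - 1)
    (hcount : ∀ C ∈ N, (exchangePairs N C).card = polyDim (matroidPolytope N)) (hB : B ∈ N)
    (hJ : 2 ≤ J.card) : ∃ z ∈ J, ∀ x ∈ J, x ≠ z → (exchangeGraph N B).Adj z x := by
  set G := exchangeGraph N B
  have hpath : ∀ {a b b' c}, G.Adj a b → G.Adj a b' → G.Adj b c → b ≠ b' → a ≠ c → False :=
    exchangeGraph_not_path_three hN hcount hB
  obtain ⟨p, hp⟩ : (exchangePairs N B).Nonempty := card_pos.1 (by rw [hcount B hB, hdim]; omega)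
  have hadj : G.Adj p.1 p.2 := exchangeGraph_adj_of_mem hp
  obtain ⟨z, w, hzw, hleaf⟩ : ∃ z w, G.Adj z w ∧ ∀ c, G.Adj w c → c = z := by
    by_cases h : ∀ c, G.Adj p.2 c → c = p.1
    · exact ⟨p.1, p.2, hadj, h⟩
    obtain ⟨c, hc, hca⟩ := not_forall₂.1 h
    exact ⟨p.2, p.1, hadj.symm, fun b' hb' => by_contra fun hb => hpath hadj hb' hc (Ne.symm hb)
      (Ne.symm hca)⟩
  have hclosed : ∀ x y, G.Adj x y → (x = z ∨ G.Adj z x) → (y = z ∨ G.Adj z y) := by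
    rintro x y hxy (rfl | hzx)
    · exact .inr hxy
    by_contra! h
    by_cases hxw : x = w
    · exact h.1 (hleaf y (hxw ▸ hxy))
    · exact hpath hzx hzw hxy hxw (Ne.symm h.1)
  have hsep : ∀ q ∈ exchangePairs N B,
      q.1 ∈ {x | x = z ∨ G.Adj z x} ↔ q.2 ∈ {x | x = z ∨ G.Adj z x} := fun q hq =>
    ⟨hclosed _ _ (exchangeGraph_adj_of_mem hq), hclosed _ _ (exchangeGraph_adj_of_mem hq).symm⟩
  have hzJ : z ∈ J := by
    rcases exchangeGraph_adj.1 hzw with ⟨-, h | h⟩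
    · exact (mem_of_mem_exchangePairs hNJ hB h).1
    · exact (mem_of_mem_exchangePairs hNJ hB h).2
  refine ⟨z, hzJ, fun x hx hxz => by_contra fun hzx => ?_⟩
  have := polyDim_le_card_sub_two hN hNJ hB _ hsep hzJ (.inl rfl) hx (by simp [hxz, hzx])
  omega

theorem forall_mem_and_rank_of_forall_adj (hN : IsMatroid k N) (hNJ : ∀ I ∈ N, I ⊆ J)
    (hB : B ∈ N)
    {z : S} (hzJ : z ∈ J) (hz : ∀ x ∈ J, x ≠ z → (exchangeGraph N B).Adj z x) :
    (∀ C ⊆ J, C.card = k → C ∈ N) ∧ (k = 1 ∨ k = J.card - 1) := by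
  have hBk := hN.2.1 B hB
  by_cases hzB : z ∈ B
  · have hBz : B = {z} := eq_singleton_iff_unique_mem.2 ⟨hzB, fun x hx => by_contra fun hxz =>
      (mem_exchangePairs.1 (mem_exchangePairs_of_adj_of_mem (hz x (hNJ B hB hx) hxz) hzB)).2.1 hx⟩
    have hk : k = 1 := by rw [← hBk, hBz, card_singleton]
    refine ⟨fun C hCJ hCk => ?_, .inl hk⟩
    obtain ⟨x, rfl⟩ := card_eq_one.1 (hCk.trans hk)
    rcases eq_or_ne x z with rfl | hxz
    · rwa [← hBz]
    have h := (mem_exchangePairs.1 (mem_exchangePairs_of_adj_of_mem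
      (hz x (hCJ (mem_singleton_self x)) hxz) hzB)).2.2
    rwa [hBz, erase_singleton, insert_empty] at h
  · have hBz : B = J.erase z := by
      ext x
      refine ⟨fun hx => mem_erase.2 ⟨ne_of_mem_of_not_mem hx hzB, hNJ B hB hx⟩,
        fun hx => ?_⟩
      obtain ⟨hxz, hxJ⟩ := mem_erase.1 hx
      exact (mem_exchangePairs.1 (mem_exchangePairs_of_adj_of_notMem (hz x hxJ hxz) hzB)).1
    have hk : k = J.card - 1 := by rw [← hBk, hBz, card_erase_of_mem hzJ]
    refine ⟨fun C hCJ hCk => ?_, .inr hk⟩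
    have hJ : 0 < J.card := card_pos.2 ⟨z, hzJ⟩
    obtain ⟨x, hxJ, hxC⟩ := exists_mem_notMem_of_card_lt_card (by omega : C.card < J.card)
    have hCx : C = J.erase x := eq_of_subset_of_card_le
      (fun s hs => mem_erase.2 ⟨ne_of_mem_of_not_mem hs hxC, hCJ hs⟩)
      (by rw [card_erase_of_mem hxJ]; omega)
    rcases eq_or_ne x z with rfl | hxz
    · rwa [hCx, ← hBz]
    have h := (mem_exchangePairs.1 (mem_exchangePairs_of_adj_of_notMem (hz x hxJ hxz) hzB)).2.2
    rwa [hBz, erase_right_comm, insert_erase (mem_erase.2 ⟨hxz.symm, hzJ⟩), ← hCx] at h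

theorem eq_hypersimplex_of_card_exchangePairs (hN : IsMatroid k N) (hNJ : ∀ I ∈ N, I ⊆ J)
    (hdim : polyDim (matroidPolytope N) = J.card - 1)
    (hcount : ∀ C ∈ N, (exchangePairs N C).card = polyDim (matroidPolytope N)) :
    (N : Set (Finset S)) = {C | C ⊆ J ∧ C.card = k} ∧
      (k = 0 ∨ k = 1 ∨ k = J.card - 1 ∨ k = J.card) := by
  suffices h : (∀ C ⊆ J, C.card = k → C ∈ N) ∧
      (k = 0 ∨ k = 1 ∨ k = J.card - 1 ∨ k = J.card) from
    ⟨Set.ext fun C => ⟨fun hC => ⟨hNJ C hC, hN.2.1 C hC⟩, fun hC => h.1 C hC.1 hC.2⟩,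
      h.2⟩
  obtain ⟨B, hB⟩ := hN.1
  rcases le_or_gt J.card 1 with hJ | hJ
  · refine ⟨fun C hCJ hCk =>
      eq_of_subset_of_card_le_one (hNJ B hB) hCJ hJ (by rw [hN.2.1 B hB, hCk]) ▸ hB, ?_⟩
    have := hN.2.1 B hB ▸ (card_le_card (hNJ B hB)).trans hJ
    omega
  obtain ⟨z, hzJ, hz⟩ := exists_forall_adj hN hNJ hdim hcount hB hJ
  obtain ⟨h, hk⟩ := forall_mem_and_rank_of_forall_adj hN hNJ hB hzJ hz
  exact ⟨h, by omega⟩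

end Classification

section Partition

variable {S : Type} [DecidableEq S] {ι : Type*} [Fintype ι] {J : ι → Finset S}

theorem sum_card_eq_card_of_existsUnique [Fintype S] (hpart : ∀ x : S, ∃! i, x ∈ J i) :
    ∑ i, (J i).card = Fintype.card S := by
  classical
  rw [← card_univ, ← card_biUnion fun i _ j _ hij =>
    disjoint_left.2 fun x hi hj => hij ((hpart x).unique hi hj)]
  congr
  exact eq_univ_of_forall fun x => mem_biUnion.2 ⟨_, mem_univ _, (hpart x).exists.choose_spec⟩

theorem biUnion_inter_eq (hpart : ∀ x : S, ∃! i, x ∈ J i) {B : ι → Finset S}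
    (hB : ∀ i, B i ⊆ J i) (i : ι) : univ.biUnion B ∩ J i = B i := by
  ext x
  simp only [mem_inter, mem_biUnion, mem_univ, true_and]
  exact ⟨fun ⟨⟨j, hj⟩, hx⟩ => (hpart x).unique (hB j hj) hx ▸ hj,
    fun hx => ⟨⟨i, hx⟩, hB i hx⟩⟩

theorem delta_eq_sum_delta_inter (hpart : ∀ x : S, ∃! i, x ∈ J i) (I : Finset S) :
    delta I = ∑ i, delta (I ∩ J i) := by
  funext s
  obtain ⟨i, hi, huniq⟩ := hpart s
  rw [Finset.sum_apply, Finset.sum_eq_single i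
    (fun j _ hj => by simp [delta, show s ∉ J j from fun h => hj (huniq j h)]) (by simp)]
  simp [delta, hi]

theorem mem_of_forall_inter_mem (hpart : ∀ x : S, ∃! i, x ∈ J i)
    {Ms : ι → Finset (Finset S)} {M : Finset (Finset S)}
    (hsum : ∀ y : ι → S → ℝ, (∀ i, y i ∈ matroidPolytope (Ms i)) →
      ∑ i, y i ∈ matroidPolytope M)
    {I : Finset S} (hI : ∀ i, I ∩ J i ∈ Ms i) : I ∈ M :=
  mem_of_delta_mem_matroidPolytope
    (delta_eq_sum_delta_inter hpart I ▸ hsum _ fun i => delta_mem_matroidPolytope (hI i))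

end Partition

section Product

variable {S : Type} [Fintype S] [DecidableEq S] {ι : Type*} [Fintype ι] {J : ι → Finset S}
  {Ms : ι → Finset (Finset S)} {M : Finset (Finset S)} {k : ℕ}

/-- An exchange inside one block is an exchange of the whole base. -/
theorem sum_card_exchangePairs_le (hpart : ∀ x : S, ∃! i, x ∈ J i)
    (hsub : ∀ i, ∀ I ∈ Ms i, I ⊆ J i)
    (hsum : ∀ y : ι → S → ℝ, (∀ i, y i ∈ matroidPolytope (Ms i)) →
      ∑ i, y i ∈ matroidPolytope M)
    {I : Finset S} (hI : ∀ i, I ∩ J i ∈ Ms i) :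
    ∑ i, (exchangePairs (Ms i) (I ∩ J i)).card ≤ (exchangePairs M I).card := by
  classical
  have hblock : ∀ i, ∀ p ∈ exchangePairs (Ms i) (I ∩ J i), p.1 ∈ J i ∧ p.2 ∈ J i :=
    fun i _ hp => mem_of_mem_exchangePairs (hsub i) (hI i) hp
  rw [← card_biUnion fun i _ j _ hij => disjoint_left.2 fun p hpi hpj =>
    hij ((hpart p.1).unique (hblock i p hpi).1 (hblock j p hpj).1)]
  refine card_le_card fun p hp => ?_
  obtain ⟨i, -, hp⟩ := mem_biUnion.1 hp
  obtain ⟨ha, hb, -⟩ := mem_exchangePairs.1 hp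
  obtain ⟨haJ, hbJ⟩ := hblock i p hp
  refine mem_exchangePairs.2 ⟨(mem_inter.1 ha).1, fun h => hb (mem_inter.2 ⟨h, hbJ⟩),
    mem_of_forall_inter_mem hpart hsum fun j => ?_⟩
  rcases eq_or_ne j i with rfl | hji
  · rw [insert_inter_of_mem hbJ, erase_inter]
    exact (mem_exchangePairs.1 hp).2.2
  · rw [insert_inter_of_notMem fun h => hji ((hpart p.2).unique h hbJ), erase_inter,
      erase_eq_of_notMem fun h => hji ((hpart p.1).unique (mem_inter.1 h).2 haJ)]
    exact hI j

/-- Simplicity at a vertex of `Δ_M` bounds the total number of exchanges, while each block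
`Δ_{M_i}` needs at least `|J_i| - 1` of them at each of its vertices; so every block attains its
bound. -/
theorem card_exchangePairs_eq_polyDim_of_isSimplePolytope (hM : ∀ C ∈ M, C.card = k)
    {ks : ι → ℕ} (hMs : ∀ i, IsMatroid (ks i) (Ms i)) (hpart : ∀ x : S, ∃! i, x ∈ J i)
    (hsub : ∀ i, ∀ I ∈ Ms i, I ⊆ J i)
    (hsum : ∀ y : ι → S → ℝ, (∀ i, y i ∈ matroidPolytope (Ms i)) →
      ∑ i, y i ∈ matroidPolytope M)
    (hdim : polyDim (matroidPolytope M) + Fintype.card ι = Fintype.card S)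
    (hdims : ∀ i, polyDim (matroidPolytope (Ms i)) = (J i).card - 1)
    (hsimple : IsSimplePolytope (matroidPolytope M)) {i : ι} {B : Finset S} (hB : B ∈ Ms i) :
    (exchangePairs (Ms i) B).card = polyDim (matroidPolytope (Ms i)) := by
  classical
  choose C hC using fun j => (hMs j).1
  set B' := Function.update C i B
  have hB' : ∀ j, B' j ∈ Ms j := fun j => by
    rcases eq_or_ne j i with rfl | h
    · simpa [B'] using hB
    · simpa [B', h] using hC j
  have hIJ := biUnion_inter_eq hpart fun j => hsub j _ (hB' j)
  have hI : univ.biUnion B' ∈ M := mem_of_forall_inter_mem hpart hsum fun j => hIJ j ▸ hB' j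
  have hle := (sum_card_exchangePairs_le hpart hsub hsum fun j => hIJ j ▸ hB' j).trans
    (card_exchangePairs_le_polyDim hM hI
      (hsimple _ (delta_mem_extremePoints (delta_mem_matroidPolytope hI))))
  simp only [hIJ] at hle
  have := eq_tsub_one_of_sum_add_card_le (x := fun j => (exchangePairs (Ms j) (B' j)).card)
    (fun j => hdims j ▸ polyDim_le_card_exchangePairs (hMs j) (hB' j))
    (by rw [sum_card_eq_card_of_existsUnique hpart]; omega) i
  simpa [B', hdims] using this

end Product

theorem simple_matroid_polytope_is_product_of_simplices_general
    (S : Type) [Fintype S] [DecidableEq S] (k q : ℕ)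
    (M : Finset (Finset S)) (hM : IsMatroid k M)
    (hdim : polyDim (matroidPolytope M) + q = Fintype.card S)
    (J : Fin q → Finset S) (ks : Fin q → ℕ) (Ms : Fin q → Finset (Finset S))
    (hpart : ∀ x : S, ∃! i, x ∈ J i)
    (hMs : ∀ i, IsMatroid (ks i) (Ms i))
    (hsub : ∀ i, ∀ I ∈ Ms i, I ⊆ J i)
    (hprod : matroidPolytope M =
      {x | ∃ y : Fin q → (S → ℝ), (∀ i, y i ∈ matroidPolytope (Ms i)) ∧ x = ∑ i, y i})
    (hdims : ∀ i, polyDim (matroidPolytope (Ms i)) = (J i).card - 1)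
    (hsimple : IsSimplePolytope (matroidPolytope M)) :
    ∀ i, matroidPolytope (Ms i) = hypersimplexOn (J i) (ks i) ∧
      (ks i = 0 ∨ ks i = 1 ∨ ks i = (J i).card - 1 ∨ ks i = (J i).card) := by
  have hsum : ∀ y : Fin q → S → ℝ, (∀ i, y i ∈ matroidPolytope (Ms i)) →
      ∑ i, y i ∈ matroidPolytope M := fun y hy => hprod ▸ ⟨y, hy, rfl⟩
  intro i
  have hcount : ∀ B ∈ Ms i, (exchangePairs (Ms i) B).card = polyDim (matroidPolytope (Ms i)) :=
    fun B hB => card_exchangePairs_eq_polyDim_of_isSimplePolytope hM.2.1 hMs hpart hsub hsum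
      (by rwa [Fintype.card_fin]) hdims hsimple hB
  obtain ⟨hfamily, hk⟩ :=
    eq_hypersimplex_of_card_exchangePairs (hMs i) (hsub i) (hdims i) hcount
  exact ⟨by rw [matroidPolytope, hypersimplexOn, hfamily], hk⟩

/-- **Theorem B / Theorem 1.3.** If a matroid polytope, decomposed into a product
`Δ_M = Δ_{M_1} × ⋯ × Δ_{M_q}` along a partition `(J_1, …, J_q)` of `S` as in the decomposition
theorem (the product of polytopes supported on the disjoint coordinate subspaces `ℝ^{J_i}` being
the set of sums), is simple, then each factor `Δ_{M_i}` is the full hypersimplex `Δ_{J_i,k_i}`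
and `k_i ∈ {0, 1, |J_i| − 1, |J_i|}`. -/
theorem simple_matroid_polytope_is_product_of_simplices
    (S : Type) [Fintype S] [DecidableEq S] (k q : ℕ)
    (M : Finset (Finset S)) (hM : IsMatroid k M)
    (hdim : polyDim (matroidPolytope M) + q = Fintype.card S)
    (J : Fin q → Finset S) (ks : Fin q → ℕ) (Ms : Fin q → Finset (Finset S))
    (hpart : ∀ x : S, ∃! i, x ∈ J i)
    (hMs : ∀ i, IsMatroid (ks i) (Ms i))
    (hsub : ∀ i, ∀ I ∈ Ms i, I ⊆ J i)
    (hks : ∑ i, ks i = k)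
    (hprod : matroidPolytope M =
      {x | ∃ y : Fin q → (S → ℝ), (∀ i, y i ∈ matroidPolytope (Ms i)) ∧ x = ∑ i, y i})
    (hdims : ∀ i, polyDim (matroidPolytope (Ms i)) = (J i).card - 1)
    (hsimple : IsSimplePolytope (matroidPolytope M)) :
    ∀ i, matroidPolytope (Ms i) = hypersimplexOn (J i) (ks i) ∧
      (ks i = 0 ∨ ks i = 1 ∨ ks i = (J i).card - 1 ∨ ks i = (J i).card) :=
  simple_matroid_polytope_is_product_of_simplices_general S k q M hM hdim J ks Ms hpart hMs hsub
    hprod hdims hsimple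
end

section
/- If M is a matroid of rank k on a finite set S and dim Δ_M = |S| − q, then there exist a partition (J_1, J_2, …, J_q) of S and, for each i = 1,…,q, a matroid M_i of rank k_i on J_i, such that (k_1, k_2, …, k_q) is a partition of k (i.e. k_1 + … + k_q = k), Δ_M = Δ_{M_1} × Δ_{M_2} × … × Δ_{M_q} inside ℝ^{J_1} × ℝ^{J_2} × … × ℝ^{J_q} = ℝ^S, and dim Δ_{M_i} = |J_i| − 1 for each i. -/
open Finset Module

/-!
Call `i ~ j` when some basis `I` has `i ∈ I`, `j ∉ I` and `I - i + j` is again a basis, and let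
the `J_c` be the classes of the equivalence relation generated by `~`. Exchanges never leave a
class, so all bases meet `J_c` in the same number of elements and pieces `I ∩ J_c` of different
bases can be glued into a basis: `M` is the direct sum of its restrictions to the `J_c`, and `Δ_M`
is the sum of their polytopes. The direction of the affine span of `Δ_M` is the space of vectors
with zero sum on every class, since the differences `e_i - e_j` for `i ~ j` lie in it and span it.
Hence `dim Δ_M = |S| - #classes`, so there are exactly `q` classes, and in the same way
`dim Δ_{M|J_c} = |J_c| - 1`.
-/

open Function

section FiberSum

variable {S : Type} {ι : Type*} [Fintype S] [DecidableEq S] [DecidableEq ι]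

noncomputable def fiberSum (f : S → ι) : (S → ℝ) →ₗ[ℝ] (ι → ℝ) where
  toFun x c := ∑ s with f s = c, x s
  map_add' x y := by ext c; simp [sum_add_distrib]
  map_smul' r x := by ext c; simp [mul_sum]

theorem fiberSum_single (f : S → ι) (s : S) :
    fiberSum f (Pi.single s 1) = Pi.single (f s) 1 := by
  ext c
  simp [fiberSum, Pi.single_apply, eq_comm]

theorem fiberSum_delta (f : S → ι) (B : Finset S) (c : ι) :
    fiberSum f (delta B) c = #(({s | f s = c} : Finset S) ∩ B) := by
  simp [fiberSum, delta]

variable {f : S → ι}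

theorem fiberSum_surjective [Fintype ι] (hf : Surjective f) : Surjective (fiberSum f) := fun y =>
  ⟨∑ c, y c • Pi.single (surjInv hf c) 1, by
    simpa [map_sum, fiberSum_single, surjInv_eq hf] using (pi_eq_sum_univ' y).symm⟩

theorem ker_fiberSum_le [Fintype ι] (hf : Surjective f) {V : Submodule ℝ (S → ℝ)}
    (hV : ∀ a b, f a = f b → Pi.single a 1 - Pi.single b 1 ∈ V) :
    LinearMap.ker (fiberSum f) ≤ V := by
  intro x hx
  set g := surjInv hf
  have hrep : ∑ s, x s • Pi.single (g (f s)) (1 : ℝ) = 0 := by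
    rw [← sum_fiberwise univ f]
    refine sum_eq_zero fun c _ => ?_
    rw [sum_congr rfl fun s hs => by rw [(mem_filter.1 hs).2], ← sum_smul]
    have hc : ∑ s with f s = c, x s = 0 := congrFun (LinearMap.mem_ker.1 hx) c
    rw [hc, zero_smul]
  have hx : x = ∑ s, x s • (Pi.single s 1 - Pi.single (g (f s)) 1) := by
    simpa only [smul_sub, sum_sub_distrib, hrep, sub_zero] using pi_eq_sum_univ' x
  rw [hx]
  exact Submodule.sum_mem _ fun s _ => Submodule.smul_mem _ _ (hV _ _ (surjInv_eq hf _).symm)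

theorem finrank_vectorSpan_add_card [Fintype ι] (hf : Surjective f) {P : Set (S → ℝ)}
    (hP : ∀ p ∈ P, ∀ p' ∈ P, fiberSum f p = fiberSum f p')
    (hV : ∀ a b, f a = f b → Pi.single a 1 - Pi.single b 1 ∈ vectorSpan ℝ P) :
    finrank ℝ (vectorSpan ℝ P) + Fintype.card ι = Fintype.card S := by
  have hker : vectorSpan ℝ P = LinearMap.ker (fiberSum f) := by
    refine le_antisymm ?_ (ker_fiberSum_le hf hV)
    rw [vectorSpan_def, Submodule.span_le]
    rintro _ ⟨p, hp, p', hp', rfl⟩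
    simp [hP p hp p' hp']
  have h := (fiberSum f).finrank_range_add_finrank_ker
  rw [LinearMap.range_eq_top.2 (fiberSum_surjective hf), finrank_top,
    finrank_fintype_fun_eq_card, finrank_fintype_fun_eq_card] at h
  rw [hker]
  omega

end FiberSum

theorem Submodule.single_sub_single_mem_of_eqvGen {S : Type*} [DecidableEq S]
    {V : Submodule ℝ (S → ℝ)} {r : S → S → Prop}
    (hr : ∀ a b, r a b → Pi.single a 1 - Pi.single b 1 ∈ V) {a b : S}
    (hab : Relation.EqvGen r a b) : Pi.single a 1 - Pi.single b 1 ∈ V := by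
  induction hab with
  | rel a b h => exact hr a b h
  | refl => simp
  | symm a b _ ih => simpa using V.neg_mem ih
  | trans a b c _ _ ihab ihbc => simpa using V.add_mem ihab ihbc

def ExchangeRel {S : Type} [DecidableEq S] (M : Finset (Finset S)) (i j : S) : Prop :=
  ∃ I ∈ M, i ∈ I ∧ j ∉ I ∧ insert j (I.erase i) ∈ M

def IsExchangeClosed {S : Type} [DecidableEq S] (M : Finset (Finset S)) (J : Finset S) : Prop :=
  ∀ i j, ExchangeRel M i j → i ∈ J → j ∈ J

def restrictBases {S : Type} [DecidableEq S] (M : Finset (Finset S)) (J : Finset S) :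
    Finset (Finset S) :=
  M.image (· ∩ J)

namespace IsExchangeClosed

variable {S : Type} [DecidableEq S] {M : Finset (Finset S)} {k : ℕ} {J I K : Finset S}

theorem exists_exchange (hJ : IsExchangeClosed M J) (hM : IsMatroid k M) (hI : I ∈ M)
    (hK : K ∈ M) {i : S} (hi : i ∈ I \ K) (hiJ : i ∈ J) :
    ∃ j ∈ K \ I, j ∈ J ∧ insert j (I.erase i) ∈ M := by
  have hIK : I ≠ K := by rintro rfl; simp at hi
  obtain ⟨j, hj, hins⟩ := hM.2.2 I hI K hK hIK i hi
  exact ⟨j, hj, hJ i j ⟨I, hI, (mem_sdiff.1 hi).1, (mem_sdiff.1 hj).2, hins⟩ hiJ, hins⟩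

theorem inter_subset_of_inter_subset (hJ : IsExchangeClosed M J) (hM : IsMatroid k M)
    (hI : I ∈ M) (hK : K ∈ M) (h : I ∩ J ⊆ K) : K ∩ J ⊆ I := by
  intro x hx
  by_contra hxI
  rw [mem_inter] at hx
  obtain ⟨j, hj, hjJ, -⟩ := hJ.exists_exchange hM hK hI (mem_sdiff.2 ⟨hx.1, hxI⟩) hx.2
  exact (mem_sdiff.1 hj).2 (h (mem_inter.2 ⟨(mem_sdiff.1 hj).1, hjJ⟩))

/-- Each exchange inside `J` moves `I` one step towards `K` without touching `I \ J`. -/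
theorem sdiff_union_inter_mem (hJ : IsExchangeClosed M J) (hM : IsMatroid k M) (hI : I ∈ M)
    (hK : K ∈ M) : I \ J ∪ K ∩ J ∈ M := by
  obtain ⟨n, hn⟩ : ∃ n, #((I \ K) ∩ J) = n := ⟨_, rfl⟩
  induction n generalizing I with
  | zero =>
    have hIK : I ∩ J ⊆ K := by
      rwa [sdiff_inter_right_comm, card_eq_zero, sdiff_eq_empty_iff_subset] at hn
    have hKI := hJ.inter_subset_of_inter_subset hM hI hK hIK
    have hIJ : I ∩ J = K ∩ J :=
      Subset.antisymm (subset_inter hIK inter_subset_right) (subset_inter hKI inter_subset_right)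
    rwa [← hIJ, sdiff_union_inter]
  | succ n ih =>
    obtain ⟨i, hi⟩ := card_pos.1 (by omega : 0 < #((I \ K) ∩ J))
    rw [mem_inter] at hi
    obtain ⟨j, hj, hjJ, hins⟩ := hJ.exists_exchange hM hI hK hi.1 hi.2
    have hsdiff : insert j (I.erase i) \ J = I \ J := by grind
    have hcard : (insert j (I.erase i) \ K) ∩ J = ((I \ K) ∩ J).erase i := by grind
    rw [← hsdiff]
    exact ih hins (by rw [hcard, card_erase_of_mem (mem_inter.2 hi), hn, Nat.add_sub_cancel])

theorem card_inter_eq (hJ : IsExchangeClosed M J) (hM : IsMatroid k M) (hI : I ∈ M)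
    (hK : K ∈ M) : #(I ∩ J) = #(K ∩ J) := by
  have hsplice := hM.2.1 _ (hJ.sdiff_union_inter_mem hM hI hK)
  rw [card_union_of_disjoint (sdiff_disjoint.mono_right inter_subset_right)] at hsplice
  have := card_sdiff_add_card_inter I J
  have := hM.2.1 I hI
  omega

theorem isMatroid_restrictBases (hJ : IsExchangeClosed M J) (hM : IsMatroid k M)
    {I₀ : Finset S} (hI₀ : I₀ ∈ M) : IsMatroid #(I₀ ∩ J) (restrictBases M J) := by
  refine ⟨⟨_, mem_image_of_mem _ hI₀⟩, ?_, ?_⟩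
  · intro _ hB
    obtain ⟨K, hK, rfl⟩ := mem_image.1 hB
    exact hJ.card_inter_eq hM hK hI₀
  · intro _ hB _ hB' _ i hi
    obtain ⟨I, hI, rfl⟩ := mem_image.1 hB
    obtain ⟨K, hK, rfl⟩ := mem_image.1 hB'
    have hiJ : i ∈ J := (mem_inter.1 (mem_sdiff.1 hi).1).2
    have hiK : i ∈ I \ (I \ J ∪ K ∩ J) := by grind
    obtain ⟨j, hj, hjJ, hins⟩ :=
      hJ.exists_exchange hM hI (hJ.sdiff_union_inter_mem hM hI hK) hiK hiJ
    exact ⟨j, by grind, mem_image.2 ⟨_, hins, by grind⟩⟩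

end IsExchangeClosed

section Partition

variable {S : Type} [DecidableEq S] {ι : Type*} [Fintype ι] {J : ι → Finset S}

omit [DecidableEq S] [Fintype ι] in
theorem pairwise_disjoint_of_existsUnique_mem (hJ : ∀ x, ∃! i, x ∈ J i) :
    Pairwise (Disjoint on J) := fun _ _ hij =>
  disjoint_left.2 fun x hi hj => hij ((hJ x).unique hi hj)

theorem sum_delta_inter (hJ : ∀ x, ∃! i, x ∈ J i) (I : Finset S) :
    ∑ i, delta (I ∩ J i) = delta I := by
  ext x
  obtain ⟨i₀, hi₀, huniq⟩ := hJ x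
  rw [Finset.sum_apply, sum_eq_single i₀ (fun i _ hi => by grind [delta]) (by simp)]
  simp [delta, hi₀]

theorem sum_card_inter (hJ : ∀ x, ∃! i, x ∈ J i) (I : Finset S) :
    ∑ i, #(I ∩ J i) = #I := by
  rw [← card_biUnion fun i _ j _ hij =>
    (pairwise_disjoint_of_existsUnique_mem hJ hij).mono inter_subset_right inter_subset_right]
  congr
  ext x
  simpa using fun _ => (hJ x).exists

variable {M : Finset (Finset S)} {k : ℕ}

theorem exists_mem_forall_inter_eq (hM : IsMatroid k M) (hJM : ∀ i, IsExchangeClosed M (J i))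
    (hdisj : Pairwise (Disjoint on J)) {B : ι → Finset S}
    (hB : ∀ i, B i ∈ restrictBases M (J i)) : ∃ I ∈ M, ∀ i, I ∩ J i = B i := by
  classical
  suffices ∀ T : Finset ι, ∃ I ∈ M, ∀ i ∈ T, I ∩ J i = B i by
    simpa using this univ
  intro T
  induction T using Finset.induction_on with
  | empty =>
    obtain ⟨I, hI⟩ := hM.1
    exact ⟨I, hI, by simp⟩
  | @insert c T hcT ih =>
    obtain ⟨I, hI, hIT⟩ := ih
    obtain ⟨K, hK, hKc⟩ := mem_image.1 (hB c)
    refine ⟨I \ J c ∪ K ∩ J c, (hJM c).sdiff_union_inter_mem hM hI hK, fun d hd => ?_⟩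
    rcases mem_insert.1 hd with rfl | hdT
    · rw [← hKc]
      grind
    · have hcd := disjoint_left.1 (hdisj (ne_of_mem_of_not_mem hdT hcT).symm)
      rw [← hIT d hdT]
      grind

theorem matroidPolytope_eq_sum (hM : IsMatroid k M) (hJM : ∀ i, IsExchangeClosed M (J i))
    (hJ : ∀ x, ∃! i, x ∈ J i) :
    matroidPolytope M = {x | ∃ y : ι → S → ℝ,
      (∀ i, y i ∈ matroidPolytope (restrictBases M (J i))) ∧ x = ∑ i, y i} := by
  let σ : (ι → S → ℝ) →ₗ[ℝ] (S → ℝ) := ∑ i, LinearMap.proj i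
  have hσ (y : ι → S → ℝ) : σ y = ∑ i, y i := by simp [σ]
  have hvert : σ '' Set.univ.pi (fun i => delta '' restrictBases M (J i)) = delta '' M := by
    ext x
    constructor
    · rintro ⟨y, hy, rfl⟩
      choose B hB hBy using fun i => hy i (Set.mem_univ i)
      obtain ⟨I, hI, hIB⟩ :=
        exists_mem_forall_inter_eq hM hJM (pairwise_disjoint_of_existsUnique_mem hJ) hB
      refine ⟨I, hI, ?_⟩
      simp only [hσ, ← hBy, ← hIB, sum_delta_inter hJ]
    · rintro ⟨I, hI, rfl⟩
      exact ⟨fun i => delta (I ∩ J i), fun i _ => ⟨_, mem_image_of_mem _ hI, rfl⟩,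
        by simp [hσ, sum_delta_inter hJ]⟩
  calc matroidPolytope M
      = σ '' Set.univ.pi (fun i => matroidPolytope (restrictBases M (J i))) := by
        rw [matroidPolytope, ← hvert, ← σ.image_convexHull, convexHull_pi]
        rfl
    _ = _ := by
        ext x
        simp [hσ, eq_comm]

end Partition

section Components

variable {S : Type} [DecidableEq S] {M : Finset (Finset S)} {k : ℕ}

theorem delta_sub_delta_exchange {I : Finset S} {a b : S} (ha : a ∈ I) (hb : b ∉ I) :
    delta I - delta (insert b (I.erase a)) = Pi.single a 1 - Pi.single b 1 := by
  ext s
  simp only [Pi.sub_apply, delta, Pi.single_apply, mem_insert, mem_erase]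
  grind

theorem single_sub_single_mem_vectorSpan {a b : S} (h : Relation.EqvGen (ExchangeRel M) a b) :
    Pi.single a 1 - Pi.single b 1 ∈ vectorSpan ℝ (delta '' (M : Set (Finset S))) := by
  refine Submodule.single_sub_single_mem_of_eqvGen (fun a b ⟨I, hI, ha, hb, hins⟩ => ?_) h
  rw [← delta_sub_delta_exchange ha hb]
  exact vsub_mem_vectorSpan ℝ (Set.mem_image_of_mem _ hI) (Set.mem_image_of_mem _ hins)

theorem vectorSpan_restrictBases (M : Finset (Finset S)) (J : Finset S) :
    vectorSpan ℝ (delta '' (restrictBases M J : Set (Finset S))) =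
      (vectorSpan ℝ (delta '' (M : Set (Finset S)))).map (LinearMap.mulLeft ℝ (delta J)) := by
  rw [← (LinearMap.mulLeft ℝ (delta J)).toAffineMap_linear, AffineMap.map_vectorSpan,
    LinearMap.coe_toAffineMap, restrictBases, coe_image, Set.image_image, Set.image_image]
  congr! 2 with I
  ext s
  simp [delta, ite_and]

theorem single_sub_single_mem_vectorSpan_restrictBases {J : Finset S} {a b : S} (ha : a ∈ J)
    (hb : b ∈ J) (h : Relation.EqvGen (ExchangeRel M) a b) :
    Pi.single a 1 - Pi.single b 1 ∈
      vectorSpan ℝ (delta '' (restrictBases M J : Set (Finset S))) := by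
  rw [vectorSpan_restrictBases]
  convert Submodule.mem_map_of_mem (f := LinearMap.mulLeft ℝ (delta J))
    (single_sub_single_mem_vectorSpan h) using 1
  ext s
  simp only [LinearMap.mulLeft_apply, Pi.mul_apply, Pi.sub_apply, delta, Pi.single_apply]
  grind

theorem polyDim_matroidPolytope (M : Finset (Finset S)) :
    polyDim (matroidPolytope M) = finrank ℝ (vectorSpan ℝ (delta '' (M : Set (Finset S)))) := by
  rw [polyDim, matroidPolytope, affineSpan_convexHull, direction_affineSpan]

variable [Fintype S]

open Classical in
noncomputable def component (M : Finset (Finset S)) (c : Quot (ExchangeRel M)) : Finset S :=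
  {s | Quot.mk _ s = c}

theorem mem_component {c : Quot (ExchangeRel M)} {s : S} :
    s ∈ component M c ↔ Quot.mk _ s = c := by
  simp [component]

theorem isExchangeClosed_component (c : Quot (ExchangeRel M)) :
    IsExchangeClosed M (component M c) := fun i j hij hi => by
  rw [mem_component] at hi ⊢
  rw [← hi]
  exact (Quot.sound hij).symm

theorem component_nonempty (c : Quot (ExchangeRel M)) : (component M c).Nonempty := by
  obtain ⟨s, rfl⟩ := Quot.exists_rep c
  exact ⟨s, mem_component.2 rfl⟩

theorem polyDim_add_card_component (hM : IsMatroid k M) :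
    polyDim (matroidPolytope M) + Nat.card (Quot (ExchangeRel M)) = Fintype.card S := by
  classical
  have := Fintype.ofFinite (Quot (ExchangeRel M))
  rw [polyDim_matroidPolytope, Nat.card_eq_fintype_card]
  refine finrank_vectorSpan_add_card Quot.mk_surjective ?_
    fun a b hab => single_sub_single_mem_vectorSpan (Quot.eqvGen_exact hab)
  rintro _ ⟨I, hI, rfl⟩ _ ⟨K, hK, rfl⟩
  ext c
  have hc : ({s | Quot.mk _ s = c} : Finset S) = component M c := by
    ext
    simp [mem_component]
  rw [fiberSum_delta, fiberSum_delta, hc, inter_comm, inter_comm _ K,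
    (isExchangeClosed_component c).card_inter_eq hM hI hK]

theorem polyDim_restrictBases_component (hM : IsMatroid k M) (c : Quot (ExchangeRel M)) :
    polyDim (matroidPolytope (restrictBases M (component M c))) = #(component M c) - 1 := by
  set J := component M c
  -- `g` partitions `S` into `J` and the singletons outside `J`.
  let g : S → Option {s // s ∉ J} := fun s => if h : s ∈ J then none else some ⟨s, h⟩
  have hg : Surjective g := by
    rintro (_ | ⟨s, hs⟩)
    · obtain ⟨s, hs⟩ := component_nonempty c
      exact ⟨s, dif_pos hs⟩
    · exact ⟨s, by simp [g, hs]⟩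
  have hfiber (o : Option {s // s ∉ J}) (I : Finset S) :
      ({s | g s = o} : Finset S) ∩ (I ∩ J) = if o = none then I ∩ J else ∅ := by
    ext s
    cases o <;> by_cases hs : s ∈ J <;> simp [g, hs]
  have hdim := finrank_vectorSpan_add_card hg
    (P := delta '' (restrictBases M J : Set (Finset S))) ?_ ?_
  · rw [Fintype.card_option, Fintype.card_subtype_compl, Fintype.card_coe] at hdim
    have := card_le_univ J
    have := (component_nonempty c).card_pos
    rw [polyDim_matroidPolytope]
    omega
  · rintro _ ⟨_, hB, rfl⟩ _ ⟨_, hB', rfl⟩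
    obtain ⟨I, hI, rfl⟩ := mem_image.1 hB
    obtain ⟨K, hK, rfl⟩ := mem_image.1 hB'
    ext o
    rw [fiberSum_delta, fiberSum_delta, hfiber, hfiber]
    split_ifs
    · rw [(isExchangeClosed_component c).card_inter_eq hM hI hK]
    · rfl
  · intro a b hab
    by_cases ha : a ∈ J
    · have hb : b ∈ J := by
        by_contra hb
        simp [g, ha, hb] at hab
      exact single_sub_single_mem_vectorSpan_restrictBases ha hb
        (Quot.eqvGen_exact ((mem_component.1 ha).trans (mem_component.1 hb).symm))
    · have hb : b = a := by
        by_cases hb : b ∈ J <;> simp [g, ha, hb] at hab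
        exact hab.symm
      simp [hb]

end Components

/-- **Proposition 1.2 (Gelfand–Serganova).** If `M` is a matroid of rank `k` on `S` and
`dim Δ_M = |S| − q`, then there are a partition `(J_1, …, J_q)` of `S` and matroids `M_i` of
rank `k_i` on `J_i` with `k_1 + ⋯ + k_q = k` such that `Δ_M = Δ_{M_1} × ⋯ × Δ_{M_q}` inside
`ℝ^{J_1} × ⋯ × ℝ^{J_q} = ℝ^S` (the product of polytopes supported on the disjoint coordinate
subspaces `ℝ^{J_i}` being the set of sums) and `dim Δ_{M_i} = |J_i| − 1` for each `i`. -/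
theorem matroid_polytope_decomposition
    (S : Type) [Fintype S] [DecidableEq S] (k q : ℕ)
    (M : Finset (Finset S)) (hM : IsMatroid k M)
    (hdim : polyDim (matroidPolytope M) + q = Fintype.card S) :
    ∃ (J : Fin q → Finset S) (ks : Fin q → ℕ) (Ms : Fin q → Finset (Finset S)),
      (∀ x : S, ∃! i, x ∈ J i) ∧
      (∀ i, IsMatroid (ks i) (Ms i)) ∧
      (∀ i, ∀ I ∈ Ms i, I ⊆ J i) ∧
      (∑ i, ks i = k) ∧
      (matroidPolytope M =
        {x | ∃ y : Fin q → (S → ℝ), (∀ i, y i ∈ matroidPolytope (Ms i)) ∧ x = ∑ i, y i}) ∧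
      (∀ i, polyDim (matroidPolytope (Ms i)) = (J i).card - 1) := by
  obtain ⟨I₀, hI₀⟩ := hM.1
  have hq : Nat.card (Quot (ExchangeRel M)) = q := by
    have := polyDim_add_card_component hM
    omega
  let e : Fin q ≃ Quot (ExchangeRel M) := (Finite.equivFinOfCardEq hq).symm
  let J i := component M (e i)
  have hJM (i : Fin q) : IsExchangeClosed M (J i) := isExchangeClosed_component (e i)
  have hJ (x : S) : ∃! i, x ∈ J i := by
    refine ⟨e.symm (Quot.mk _ x), ?_, fun i hi => ?_⟩
    · simp [J, mem_component]
    · rw [mem_component.1 hi, Equiv.symm_apply_apply]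
  refine ⟨J, fun i => #(I₀ ∩ J i), fun i => restrictBases M (J i), hJ,
    fun i => (hJM i).isMatroid_restrictBases hM hI₀, fun i I hI => ?_, ?_,
    matroidPolytope_eq_sum hM hJM hJ, fun i => polyDim_restrictBases_component hM (e i)⟩
  · obtain ⟨K, -, rfl⟩ := mem_image.1 hI
    exact inter_subset_right
  · rw [sum_card_inter hJ, hM.2.1 I₀ hI₀]
end

section
/- Let Δ_M be the matroid polytope of a matroid M of rank k on [n] with dim Δ_M = n − 1, let v = δ_J be a vertex of Δ_M, and let U ⊆ [n] with |U ∩ J| = |U \ J| = 2. If the induced subgraph of Γ(R_v(Δ_M)) on U is isomorphic either to the graph on four vertices consisting of two disjoint edges, or to the path on four vertices with three edges, then δ_K is a vertex of Δ_M, where K = (J \ U) ∪ (U \ J) is the symmetric difference of J and U. -/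
open Finset Module

/-- The `i`-th standard basis vector `δ_i` of `ℝⁿ`. -/
def stdBasis (n : ℕ) (i : Fin n) : Fin n → ℝ := fun j => if j = i then 1 else 0

/-- The set `Φ = {δ_i − δ_j : i ≠ j in [n]}`. -/
def Phi (n : ℕ) : Set (Fin n → ℝ) :=
  {x | ∃ i j : Fin n, i ≠ j ∧ x = stdBasis n i - stdBasis n j}

/-- For `R ⊆ Φ` with `R ∩ (−R) = ∅`, the simple graph `Γ(R)` on vertex set `[n]` in which
`{i, j}` is an edge iff `δ_i − δ_j ∈ R` or `δ_j − δ_i ∈ R`. -/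
def Gamma (n : ℕ) (R : Set (Fin n → ℝ)) : SimpleGraph (Fin n) :=
  SimpleGraph.fromRel (fun i j => stdBasis n i - stdBasis n j ∈ R)

/-- For a vertex `v = δ_J` of the matroid polytope `Δ_M`, the set
`R_v(Δ_M) = {δ_i − δ_j : ∃ I ∈ M, δ_Iδ_J is an edge of Δ_M, {i} = I \ J, {j} = J \ I}`. -/
def Rv (n : ℕ) (M : Finset (Finset (Fin n))) (J : Finset (Fin n)) : Set (Fin n → ℝ) :=
  {x | ∃ I ∈ M, IsEdgeOf (matroidPolytope M) (segment ℝ (delta I) (delta J)) ∧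
    ∃ i j : Fin n, I \ J = {i} ∧ J \ I = {j} ∧ x = stdBasis n i - stdBasis n j}

/-- The graph on four vertices consisting of two disjoint edges. -/
def twoDisjointEdges : SimpleGraph (Fin 4) :=
  SimpleGraph.fromRel (fun a b => (a = 0 ∧ b = 1) ∨ (a = 2 ∧ b = 3))

section AuxBasic

variable {n : ℕ}

/-- The linear functional `x ↦ ∑_{s ∈ A} x s` as a continuous linear map. -/
noncomputable def coordSum (n : ℕ) (A : Finset (Fin n)) : (Fin n → ℝ) →L[ℝ] ℝ :=
  LinearMap.toContinuousLinearMap (∑ s ∈ A, LinearMap.proj (R := ℝ) (φ := fun _ : Fin n => ℝ) s)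

lemma coordSum_apply (A : Finset (Fin n)) (x : Fin n → ℝ) :
    coordSum n A x = ∑ s ∈ A, x s := by
  simp [coordSum]

lemma coordSum_delta (A B : Finset (Fin n)) :
    coordSum n A (delta B) = ((A ∩ B).card : ℝ) := by
  rw [coordSum_apply]
  unfold delta
  rw [Finset.sum_boole]
  rw [Finset.filter_mem_eq_inter]

lemma delta_injective_s10 : Function.Injective (delta (S := Fin n)) := by
  intro B C h
  ext s
  have := congrFun h s
  unfold delta at this
  by_cases hB : s ∈ B <;> by_cases hC : s ∈ C <;> simp [hB, hC] at this ⊢ <;> norm_num at this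

lemma inter_card_lt {k : ℕ} {B C : Finset (Fin n)} (hB : B.card = k) (hC : C.card = k)
    (hne : B ≠ C) : (B ∩ C).card < k := by
  have h1 : (B ∩ C).card ≤ k := hB ▸ Finset.card_le_card Finset.inter_subset_left
  rcases lt_or_eq_of_le h1 with h | h
  · exact h
  · exfalso
    have h2 : B ∩ C = B := Finset.eq_of_subset_of_card_le Finset.inter_subset_left (by omega)
    have h3 : B ⊆ C := Finset.inter_eq_left.mp h2
    exact hne (Finset.eq_of_subset_of_card_le h3 (by omega))

end AuxBasic
section FaceHull

variable {n : ℕ}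

lemma face_hull (F : Finset (Fin n → ℝ)) (l : (Fin n → ℝ) →L[ℝ] ℝ) (c : ℝ)
    (hle : ∀ z ∈ F, l z ≤ c) :
    {x ∈ convexHull ℝ (F : Set (Fin n → ℝ)) | c ≤ l x}
      = convexHull ℝ {z : Fin n → ℝ | z ∈ F ∧ c ≤ l z} := by
  apply Set.Subset.antisymm
  · rintro x ⟨hx, hcx⟩
    rw [Finset.convexHull_eq] at hx
    obtain ⟨w, hw0, hw1, hwx⟩ := hx
    have hx' : x = ∑ y ∈ F, w y • y := by
      rw [← hwx, Finset.centerMass, hw1, inv_one, one_smul]; rfl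
    have hlx : l x = ∑ y ∈ F, w y * l y := by
      rw [hx', map_sum]
      simp [smul_eq_mul]
    have hsum0 : ∑ y ∈ F, w y * (c - l y) ≤ 0 := by
      have : ∑ y ∈ F, w y * (c - l y) = c * (∑ y ∈ F, w y) - l x := by
        rw [hlx, Finset.mul_sum, ← Finset.sum_sub_distrib]
        congr 1; ext y; ring
      rw [this, hw1, mul_one]
      linarith
    have hterm : ∀ y ∈ F, 0 ≤ w y * (c - l y) := fun y hy =>
      mul_nonneg (hw0 y hy) (by linarith [hle y hy])
    have hzero : ∀ y ∈ F, w y * (c - l y) = 0 := by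
      have := Finset.sum_eq_zero_iff_of_nonneg hterm
      have hs0 : ∑ y ∈ F, w y * (c - l y) = 0 :=
        le_antisymm hsum0 (Finset.sum_nonneg hterm)
      exact this.mp hs0
    have hkey : ∀ y ∈ F, w y ≠ 0 → c ≤ l y := by
      intro y hy hwy
      have := hzero y hy
      rcases mul_eq_zero.mp this with h | h
      · exact absurd h hwy
      · linarith
    have hxc : x = Finset.centerMass {y ∈ F | w y ≠ 0} w id := by
      rw [Finset.centerMass_filter_ne_zero, hwx]
    rw [hxc]
    apply Finset.centerMass_mem_convexHull
    · intro i hi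
      exact hw0 i (Finset.mem_filter.mp hi).1
    · rw [Finset.sum_filter_ne_zero, hw1]; norm_num
    · intro i hi
      obtain ⟨hiF, hiw⟩ := Finset.mem_filter.mp hi
      exact ⟨hiF, hkey i hiF hiw⟩
  · apply convexHull_min
    · rintro z ⟨hz1, hz2⟩
      exact ⟨subset_convexHull ℝ _ hz1, hz2⟩
    · apply Convex.inter (convex_convexHull ℝ _)
      exact convex_halfSpace_ge ⟨l.map_add, l.map_smul⟩ c

end FaceHull
section Polytope

variable {n : ℕ}

lemma matroidPolytope_eq (M : Finset (Finset (Fin n))) :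
    matroidPolytope M = convexHull ℝ ((M.image delta : Finset (Fin n → ℝ)) : Set (Fin n → ℝ)) := by
  rw [matroidPolytope, Finset.coe_image]

/-- If the linear functional `l` is at most `c` on all `delta B`, `B ∈ M`, with equality exactly
on `M₀ ⊆ M`, then `{x ∈ P | ∀ y ∈ P, l y ≤ l x} = convexHull ℝ (delta '' M₀)`. -/
lemma exposed_set_eq (M : Finset (Finset (Fin n))) (l : (Fin n → ℝ) →L[ℝ] ℝ) (c : ℝ)
    (M₀ : Set (Finset (Fin n))) (hM₀ : M₀.Nonempty) (hM₀M : ∀ B ∈ M₀, B ∈ M)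
    (hiff : ∀ B ∈ M, (c ≤ l (delta B) ↔ B ∈ M₀)) (hle : ∀ B ∈ M, l (delta B) ≤ c) :
    {x ∈ matroidPolytope M | ∀ y ∈ matroidPolytope M, l y ≤ l x}
      = convexHull ℝ (delta '' M₀) := by
  obtain ⟨B₀, hB₀⟩ := hM₀
  have hcB₀ : l (delta B₀) = c :=
    le_antisymm (hle B₀ (hM₀M B₀ hB₀)) ((hiff B₀ (hM₀M B₀ hB₀)).mpr hB₀)
  have hmem : delta B₀ ∈ matroidPolytope M :=
    subset_convexHull ℝ _ ⟨B₀, hM₀M B₀ hB₀, rfl⟩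
  have hub : ∀ y ∈ matroidPolytope M, l y ≤ c := by
    intro y hy
    rw [matroidPolytope] at hy
    refine convexHull_min ?_ (convex_halfSpace_le ⟨l.map_add, l.map_smul⟩ c) hy
    rintro z ⟨B, hB, rfl⟩
    exact hle B hB
  have h1 : {x ∈ matroidPolytope M | ∀ y ∈ matroidPolytope M, l y ≤ l x}
      = {x ∈ matroidPolytope M | c ≤ l x} := by
    ext x
    constructor
    · rintro ⟨hx, hx2⟩
      exact ⟨hx, hcB₀ ▸ hx2 (delta B₀) hmem⟩
    · rintro ⟨hx, hx2⟩
      exact ⟨hx, fun y hy => (hub y hy).trans hx2⟩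
  have hle' : ∀ z ∈ M.image delta, l z ≤ c := by
    intro z hz
    obtain ⟨B, hB, rfl⟩ := Finset.mem_image.mp hz
    exact hle B hB
  rw [h1, matroidPolytope_eq, face_hull _ l c hle']
  congr 1
  ext z
  constructor
  · rintro ⟨hz1, hz2⟩
    obtain ⟨B, hB, rfl⟩ := Finset.mem_image.mp hz1
    exact ⟨B, (hiff B hB).mp hz2, rfl⟩
  · rintro ⟨B, hB, rfl⟩
    exact ⟨Finset.mem_image.mpr ⟨B, hM₀M B hB, rfl⟩, (hiff B (hM₀M B hB)).mpr hB⟩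

/-- L3: each `delta K`, `K ∈ M`, is an extreme point of the matroid polytope. -/
lemma delta_mem_extremePoints_s10 {k : ℕ} {M : Finset (Finset (Fin n))} (hM : IsMatroid k M)
    {K : Finset (Fin n)} (hK : K ∈ M) :
    delta K ∈ Set.extremePoints ℝ (matroidPolytope M) := by
  have hcard := hM.2.1
  set l := coordSum n K with hl
  have hiff : ∀ B ∈ M, ((k : ℝ) ≤ l (delta B) ↔ B ∈ ({K} : Set (Finset (Fin n)))) := by
    intro B hB
    rw [hl, coordSum_delta]
    constructor
    · intro h
      by_contra hne
      have : (K ∩ B).card < k := inter_card_lt (hcard K hK) (hcard B hB) (Ne.symm hne)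
      have := Nat.cast_lt (α := ℝ) |>.mpr this
      linarith
    · rintro rfl
      rw [Finset.inter_self, hcard B hB]
  have hle : ∀ B ∈ M, l (delta B) ≤ (k : ℝ) := by
    intro B hB
    rw [hl, coordSum_delta]
    have : (K ∩ B).card ≤ k := (hcard B hB) ▸ Finset.card_le_card Finset.inter_subset_right
    exact_mod_cast this
  have hexp := exposed_set_eq M l (k : ℝ) {K} ⟨K, rfl⟩ (by simpa using hK) hiff hle
  rw [Set.image_singleton, convexHull_singleton] at hexp
  have hexposed : IsExposed ℝ (matroidPolytope M) {delta K} := by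
    intro _
    exact ⟨l, hexp.symm⟩
  exact (hexposed.isExtreme).mem_extremePoints

/-- L2: two bases differing by a single exchange give an edge of the matroid polytope. -/
lemma segment_isEdge {k : ℕ} {M : Finset (Finset (Fin n))} (hM : IsMatroid k M)
    {I J : Finset (Fin n)} (hI : I ∈ M) (hJ : J ∈ M) (hne : I ≠ J)
    {i : Fin n} (hIJ : I \ J = {i}) :
    IsEdgeOf (matroidPolytope M) (segment ℝ (delta I) (delta J)) := by
  have hcard := hM.2.1
  have hkI := hcard I hI
  have hkJ := hcard J hJ
  have hiIJ : i ∈ I \ J := hIJ ▸ Finset.mem_singleton_self i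
  have hinter : (I \ J).card + (I ∩ J).card = I.card := Finset.card_sdiff_add_card_inter I J
  rw [hIJ, Finset.card_singleton, hkI] at hinter
  -- (I ∩ J).card = k - 1, and k ≥ 1
  have hk1 : 1 ≤ k := by omega
  set l := coordSum n I + coordSum n J with hl
  have hlB : ∀ B : Finset (Fin n), l (delta B) = ((I ∩ B).card : ℝ) + ((J ∩ B).card : ℝ) := by
    intro B
    rw [hl]
    simp [coordSum_delta]
  set c : ℝ := ((2 * k - 1 : ℕ) : ℝ) with hc
  have hIJc : (I ∩ J).card = k - 1 := by omega
  have hvalI : l (delta I) = c := by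
    rw [hlB, Finset.inter_self, hkI, Finset.inter_comm, hIJc, hc]
    have : k + (k - 1) = 2 * k - 1 := by omega
    exact_mod_cast this
  have hvalJ : l (delta J) = c := by
    rw [hlB, Finset.inter_self, hkJ, hIJc, hc]
    have : (k - 1) + k = 2 * k - 1 := by omega
    exact_mod_cast this
  have hle : ∀ B ∈ M, l (delta B) ≤ c := by
    intro B hB
    by_cases hBI : B = I
    · subst hBI; exact hvalI.le
    by_cases hBJ : B = J
    · subst hBJ; exact hvalJ.le
    · rw [hlB]
      have h1 : (I ∩ B).card < k := inter_card_lt hkI (hcard B hB) (fun h => hBI h.symm)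
      have h2 : (J ∩ B).card < k := inter_card_lt hkJ (hcard B hB) (fun h => hBJ h.symm)
      rw [hc]
      have : (I ∩ B).card + (J ∩ B).card ≤ 2 * k - 2 := by omega
      have hcast : ((I ∩ B).card : ℝ) + ((J ∩ B).card : ℝ) ≤ ((2 * k - 2 : ℕ) : ℝ) := by
        exact_mod_cast this
      have : ((2 * k - 2 : ℕ) : ℝ) ≤ ((2 * k - 1 : ℕ) : ℝ) := by
        exact_mod_cast Nat.sub_le_sub_left (by norm_num) (2 * k)
      linarith
  have hiff : ∀ B ∈ M, (c ≤ l (delta B) ↔ B ∈ ({I, J} : Set (Finset (Fin n)))) := by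
    intro B hB
    constructor
    · intro h
      by_contra hnot
      simp only [Set.mem_insert_iff, Set.mem_singleton_iff] at hnot
      push_neg at hnot
      obtain ⟨hBI, hBJ⟩ := hnot
      have h1 : (I ∩ B).card < k := inter_card_lt hkI (hcard B hB) (fun h => hBI h.symm)
      have h2 : (J ∩ B).card < k := inter_card_lt hkJ (hcard B hB) (fun h => hBJ h.symm)
      rw [hlB] at h
      have hn : (I ∩ B).card + (J ∩ B).card ≤ 2 * k - 2 := by omega
      have hcast : ((I ∩ B).card : ℝ) + ((J ∩ B).card : ℝ) ≤ ((2 * k - 2 : ℕ) : ℝ) := by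
        exact_mod_cast hn
      have hlt : ((2 * k - 2 : ℕ) : ℝ) < ((2 * k - 1 : ℕ) : ℝ) := by
        exact_mod_cast (by omega : 2 * k - 2 < 2 * k - 1)
      rw [hc] at h
      linarith
    · rintro (rfl | rfl)
      · exact hvalI.ge
      · exact hvalJ.ge
  have hexp := exposed_set_eq M l c {I, J} ⟨I, Or.inl rfl⟩
    (by rintro B (rfl | rfl) <;> assumption) hiff hle
  have himg : delta '' ({I, J} : Set (Finset (Fin n))) = {delta I, delta J} := by
    simp [Set.image_insert_eq]
  rw [himg, convexHull_pair] at hexp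
  constructor
  · intro _
    exact ⟨l, hexp.symm⟩
  · rw [← convexHull_pair, affineSpan_convexHull, direction_affineSpan, vectorSpan_pair]
    have hne' : delta I - delta J ≠ 0 := by
      rw [sub_ne_zero]
      exact fun h => hne (delta_injective_s10 h)
    exact finrank_span_singleton hne'

end Polytope
section Combinatorics

variable {n : ℕ}

lemma stdBasis_sub_eq {u w i j : Fin n} (hu : u ≠ w) (hij : i ≠ j)
    (h : stdBasis n u - stdBasis n w = stdBasis n i - stdBasis n j) : u = i ∧ w = j := by
  have h1 := congrFun h u
  have h2 := congrFun h w
  simp only [Pi.sub_apply, stdBasis] at h1 h2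
  rw [if_neg hu] at h1
  rw [if_neg (Ne.symm hu)] at h2
  simp only [if_true] at h1 h2
  constructor
  · by_contra e1
    rw [if_neg e1] at h1
    by_cases e2 : u = j
    · rw [if_pos e2] at h1; norm_num at h1
    · rw [if_neg e2] at h1; norm_num at h1
  · by_contra e2
    rw [if_neg e2] at h2
    by_cases e1 : w = i
    · rw [if_pos e1] at h2; norm_num at h2
    · rw [if_neg e1] at h2; norm_num at h2

lemma mem_of_sdiff_singleton {A B : Finset (Fin n)} {i : Fin n} (h : A \ B = {i}) :
    i ∈ A ∧ i ∉ B := by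
  have : i ∈ A \ B := h ▸ Finset.mem_singleton_self i
  exact Finset.mem_sdiff.mp this

/-- The structural fact that all edges of `Γ(R_v)` cross between `J` and its complement. -/
lemma adj_sides {M : Finset (Finset (Fin n))} {J : Finset (Fin n)} {p q : Fin n}
    (h : (Gamma n (Rv n M J)).Adj p q) : (p ∉ J ∧ q ∈ J) ∨ (p ∈ J ∧ q ∉ J) := by
  rw [Gamma, SimpleGraph.fromRel_adj] at h
  obtain ⟨hpq, h | h⟩ := h
  · obtain ⟨I, hI, hedge, i, j, hIJ, hJI, heq⟩ := h
    obtain ⟨hiI, hiJ⟩ := mem_of_sdiff_singleton hIJ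
    obtain ⟨hjJ, hjI⟩ := mem_of_sdiff_singleton hJI
    have hij : i ≠ j := fun e => hiJ (e ▸ hjJ)
    obtain ⟨rfl, rfl⟩ := stdBasis_sub_eq hpq hij heq
    exact Or.inl ⟨hiJ, hjJ⟩
  · obtain ⟨I, hI, hedge, i, j, hIJ, hJI, heq⟩ := h
    obtain ⟨hiI, hiJ⟩ := mem_of_sdiff_singleton hIJ
    obtain ⟨hjJ, hjI⟩ := mem_of_sdiff_singleton hJI
    have hij : i ≠ j := fun e => hiJ (e ▸ hjJ)
    obtain ⟨rfl, rfl⟩ := stdBasis_sub_eq (Ne.symm hpq) hij heq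
    exact Or.inr ⟨hjJ, hiJ⟩

lemma exchange_sdiff_left {J : Finset (Fin n)} {u w : Fin n} (hu : u ∉ J) (hw : w ∈ J) :
    (insert u (J.erase w)) \ J = {u} := by
  ext s
  simp only [Finset.mem_sdiff, Finset.mem_insert, Finset.mem_erase, Finset.mem_singleton]
  constructor
  · rintro ⟨h1 | ⟨h1, h2⟩, h3⟩
    · exact h1
    · exact absurd h2 h3
  · rintro rfl
    exact ⟨Or.inl rfl, hu⟩

lemma exchange_sdiff_right {J : Finset (Fin n)} {u w : Fin n} (hu : u ∉ J) (hw : w ∈ J) :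
    J \ (insert u (J.erase w)) = {w} := by
  ext s
  simp only [Finset.mem_sdiff, Finset.mem_insert, Finset.mem_erase, Finset.mem_singleton]
  constructor
  · rintro ⟨h1, h2⟩
    push_neg at h2
    by_contra hne
    exact (h2.2 hne) h1
  · rintro rfl
    refine ⟨hw, ?_⟩
    push_neg
    exact ⟨fun e => hu (e ▸ hw), fun h => absurd rfl h⟩

/-- Characterization of adjacency in `Γ(R_v(Δ_M))` across the bipartition. -/
lemma adj_iff {k : ℕ} {M : Finset (Finset (Fin n))} (hM : IsMatroid k M)
    {J : Finset (Fin n)} (hJ : J ∈ M) {u w : Fin n} (hu : u ∉ J) (hw : w ∈ J) :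
    (Gamma n (Rv n M J)).Adj u w ↔ insert u (J.erase w) ∈ M := by
  constructor
  · intro h
    rw [Gamma, SimpleGraph.fromRel_adj] at h
    obtain ⟨hpq, h | h⟩ := h
    · obtain ⟨I, hI, hedge, i, j, hIJ, hJI, heq⟩ := h
      obtain ⟨hiI, hiJ⟩ := mem_of_sdiff_singleton hIJ
      obtain ⟨hjJ, hjI⟩ := mem_of_sdiff_singleton hJI
      have hij : i ≠ j := fun e => hiJ (e ▸ hjJ)
      obtain ⟨rfl, rfl⟩ := stdBasis_sub_eq hpq hij heq
      have : I = insert u (J.erase w) := by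
        ext s
        simp only [Finset.mem_insert, Finset.mem_erase]
        constructor
        · intro hs
          by_cases hsJ : s ∈ J
          · refine Or.inr ⟨?_, hsJ⟩
            rintro rfl
            exact hjI hs
          · left
            have : s ∈ I \ J := Finset.mem_sdiff.mpr ⟨hs, hsJ⟩
            rw [hIJ] at this
            exact Finset.mem_singleton.mp this
        · rintro (rfl | ⟨hs1, hs2⟩)
          · exact hiI
          · by_contra hsI
            have : s ∈ J \ I := Finset.mem_sdiff.mpr ⟨hs2, hsI⟩
            rw [hJI] at this
            exact hs1 (Finset.mem_singleton.mp this)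
      exact this ▸ hI
    · obtain ⟨I, hI, hedge, i, j, hIJ, hJI, heq⟩ := h
      obtain ⟨hiI, hiJ⟩ := mem_of_sdiff_singleton hIJ
      obtain ⟨hjJ, hjI⟩ := mem_of_sdiff_singleton hJI
      have hij : i ≠ j := fun e => hiJ (e ▸ hjJ)
      obtain ⟨rfl, rfl⟩ := stdBasis_sub_eq (Ne.symm hpq) hij heq
      exact absurd hw hiJ
  · intro hmem
    have hne : insert u (J.erase w) ≠ J := by
      intro h
      exact hu (h ▸ Finset.mem_insert_self u _)
    have huw : u ≠ w := fun e => hu (e ▸ hw)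
    rw [Gamma, SimpleGraph.fromRel_adj]
    refine ⟨huw, Or.inl ?_⟩
    exact ⟨insert u (J.erase w), hmem,
      segment_isEdge hM hmem hJ hne (exchange_sdiff_left hu hw), u, w,
      exchange_sdiff_left hu hw, exchange_sdiff_right hu hw, rfl⟩

end Combinatorics
section KeyExchange

variable {n : ℕ}

lemma key_exchange {k : ℕ} {M : Finset (Finset (Fin n))} (hM : IsMatroid k M)
    {J : Finset (Fin n)} (hJ : J ∈ M) {x x' y y' : Fin n}
    (hx : x ∈ J) (hx' : x' ∈ J) (hy : y ∉ J) (hy' : y' ∉ J) (hxx : x ≠ x') (hyy : y ≠ y')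
    (h1 : insert y (J.erase x) ∈ M) (h2 : insert y' (J.erase x') ∈ M)
    (h3 : insert y (J.erase x') ∉ M) :
    insert y' ((insert y (J.erase x)).erase x') ∈ M := by
  set I₁ := insert y (J.erase x) with hI₁
  set I₂ := insert y' (J.erase x') with hI₂
  have hyx : y ≠ x := fun e => hy (e ▸ hx)
  have hyx' : y ≠ x' := fun e => hy (e ▸ hx')
  have hy'x : y' ≠ x := fun e => hy' (e ▸ hx)
  have hy'x' : y' ≠ x' := fun e => hy' (e ▸ hx')
  have hyI₂ : y ∉ I₂ := by
    rw [hI₂]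
    simp only [Finset.mem_insert, Finset.mem_erase]
    push_neg
    exact ⟨hyy, fun _ => hy⟩
  have hne : I₁ ≠ I₂ := fun h => hyI₂ (h ▸ Finset.mem_insert_self y _)
  have hx'mem : x' ∈ I₁ \ I₂ := by
    rw [Finset.mem_sdiff, hI₁, hI₂]
    simp only [Finset.mem_insert, Finset.mem_erase]
    push_neg
    exact ⟨Or.inr ⟨Ne.symm hxx, hx'⟩, Ne.symm hy'x', fun h => absurd rfl h⟩
  obtain ⟨j, hj, hjmem⟩ := hM.2.2 I₁ h1 I₂ h2 hne x' hx'mem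
  have hjcase : j = x ∨ j = y' := by
    rw [Finset.mem_sdiff, hI₁, hI₂] at hj
    simp only [Finset.mem_insert, Finset.mem_erase] at hj
    obtain ⟨hja, hjb⟩ := hj
    push_neg at hjb
    rcases hja with hj1 | ⟨hj1, hj2⟩
    · exact Or.inr hj1
    · left
      by_contra hcon
      exact (hjb.2 hcon) hj2
  rcases hjcase with rfl | rfl
  · exfalso
    apply h3
    have heq : insert j (I₁.erase x') = insert y (J.erase x') := by
      ext s
      rw [hI₁]
      simp only [Finset.mem_insert, Finset.mem_erase]
      constructor
      · rintro (rfl | ⟨hs1, rfl | ⟨hs2, hs3⟩⟩)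
        · exact Or.inr ⟨hxx, hx⟩
        · exact Or.inl rfl
        · exact Or.inr ⟨hs1, hs3⟩
      · rintro (rfl | ⟨hs1, hs2⟩)
        · exact Or.inr ⟨hyx', Or.inl rfl⟩
        · by_cases e : s = j
          · exact Or.inl e
          · exact Or.inr ⟨hs1, Or.inr ⟨e, hs2⟩⟩
    exact heq ▸ hjmem
  · exact hjmem

lemma symmdiff_eq {J U : Finset (Fin n)} {x x' y y' : Fin n}
    (hx : x ∈ J) (hx' : x' ∈ J) (hy : y ∉ J) (hy' : y' ∉ J) (hxx : x ≠ x') (hyy : y ≠ y')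
    (hUeq : U = ({x, x'} : Finset (Fin n)) ∪ {y, y'}) :
    (J \ U) ∪ (U \ J) = insert y' ((insert y (J.erase x)).erase x') := by
  ext s
  simp only [hUeq, Finset.mem_union, Finset.mem_sdiff, Finset.mem_insert,
    Finset.mem_singleton, Finset.mem_erase]
  by_cases e1 : s = x <;> by_cases e2 : s = x' <;> by_cases e3 : s = y <;>
    by_cases e4 : s = y' <;> by_cases e5 : s ∈ J <;> simp_all

lemma main_of_config {n k : ℕ} {M : Finset (Finset (Fin n))} (hM : IsMatroid k M)
    {J U : Finset (Fin n)} (hJ : J ∈ M) (hU1 : (U ∩ J).card = 2) (hU2 : (U \ J).card = 2)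
    {x x' y y' : Fin n} (hxU : x ∈ U) (hx'U : x' ∈ U) (hyU : y ∈ U) (hy'U : y' ∈ U)
    (hx : x ∈ J) (hx' : x' ∈ J) (hy : y ∉ J) (hy' : y' ∉ J) (hxx : x ≠ x') (hyy : y ≠ y')
    (hadj1 : (Gamma n (Rv n M J)).Adj y x)
    (hadj2 : (Gamma n (Rv n M J)).Adj y' x')
    (hnadj : ¬ (Gamma n (Rv n M J)).Adj y x') :
    delta ((J \ U) ∪ (U \ J)) ∈ Set.extremePoints ℝ (matroidPolytope M) := by
  have h1 := (adj_iff hM hJ hy hx).mp hadj1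
  have h2 := (adj_iff hM hJ hy' hx').mp hadj2
  have h3 : insert y (J.erase x') ∉ M := fun hm => hnadj ((adj_iff hM hJ hy hx').mpr hm)
  have hK := key_exchange hM hJ hx hx' hy hy' hxx hyy h1 h2 h3
  have hUJ : U ∩ J = {x, x'} := by
    refine (Finset.eq_of_subset_of_card_le ?_ ?_).symm
    · intro s hs
      rcases Finset.mem_insert.mp hs with rfl | hs
      · exact Finset.mem_inter.mpr ⟨hxU, hx⟩
      · rw [Finset.mem_singleton] at hs
        subst hs
        exact Finset.mem_inter.mpr ⟨hx'U, hx'⟩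
    · rw [hU1, Finset.card_insert_of_notMem (by simp [hxx]), Finset.card_singleton]
  have hUJ' : U \ J = {y, y'} := by
    refine (Finset.eq_of_subset_of_card_le ?_ ?_).symm
    · intro s hs
      rcases Finset.mem_insert.mp hs with rfl | hs
      · exact Finset.mem_sdiff.mpr ⟨hyU, hy⟩
      · rw [Finset.mem_singleton] at hs
        subst hs
        exact Finset.mem_sdiff.mpr ⟨hy'U, hy'⟩
    · rw [hU2, Finset.card_insert_of_notMem (by simp [hyy]), Finset.card_singleton]
  have hUeq : U = ({x, x'} : Finset (Fin n)) ∪ {y, y'} := by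
    rw [← hUJ, ← hUJ', Finset.union_comm]
    exact (Finset.sdiff_union_inter U J).symm
  have hKeq := symmdiff_eq hx hx' hy hy' hxx hyy hUeq
  rw [hKeq]
  exact delta_mem_extremePoints_s10 hM hK

end KeyExchange

lemma induce_iso_config {n : ℕ} {G : SimpleGraph (Fin n)} {U : Finset (Fin n)}
    {H : SimpleGraph (Fin 4)} (e : G.induce (U : Set (Fin n)) ≃g H) :
    ∃ g : Fin 4 → Fin n, Function.Injective g ∧ (∀ t, g t ∈ U) ∧
      (∀ a b : Fin 4, H.Adj a b ↔ G.Adj (g a) (g b)) := by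
  refine ⟨fun t => ((e.symm t : (U : Set (Fin n))) : Fin n), ?_, ?_, ?_⟩
  · intro a b hab
    exact e.symm.injective (Subtype.coe_injective hab)
  · intro t
    exact (e.symm t).2
  · intro a b
    rw [← e.symm.map_adj_iff]
    exact Iff.rfl



/-- **Lemma 1.7.** Let `v = δ_J` be a vertex of a matroid polytope `Δ_M` of full dimension
`n − 1` and let `U ⊆ [n]` with `|U ∩ J| = |U \ J| = 2`. If the induced subgraph of
`Γ(R_v(Δ_M))` on `U` is isomorphic either to two disjoint edges or to the path on four
vertices, then `δ_K` is a vertex of `Δ_M`, where `K = (J \ U) ∪ (U \ J)`. -/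
theorem symmDiff_vertex_of_induced_subgraph
    (n k : ℕ) (M : Finset (Finset (Fin n))) (hM : IsMatroid k M)
    (hdim : polyDim (matroidPolytope M) = n - 1)
    (J : Finset (Fin n)) (hJ : J ∈ M)
    (U : Finset (Fin n)) (hU1 : (U ∩ J).card = 2) (hU2 : (U \ J).card = 2)
    (hiso : Nonempty ((Gamma n (Rv n M J)).induce (U : Set (Fin n)) ≃g twoDisjointEdges) ∨
      Nonempty ((Gamma n (Rv n M J)).induce (U : Set (Fin n)) ≃g SimpleGraph.pathGraph 4)) :
    delta ((J \ U) ∪ (U \ J)) ∈ Set.extremePoints ℝ (matroidPolytope M) := by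
  rcases hiso with he | he
  · -- two disjoint edges
    obtain ⟨e⟩ := he
    obtain ⟨g, hginj, hgU, hgadj⟩ := induce_iso_config e
    have hA01 : (Gamma n (Rv n M J)).Adj (g 0) (g 1) := by
      rw [← hgadj]
      unfold twoDisjointEdges
      rw [SimpleGraph.fromRel_adj]
      decide
    have hA23 : (Gamma n (Rv n M J)).Adj (g 2) (g 3) := by
      rw [← hgadj]
      unfold twoDisjointEdges
      rw [SimpleGraph.fromRel_adj]
      decide
    have hN : ∀ a b : Fin 4, (a = 0 ∨ a = 1) → (b = 2 ∨ b = 3) →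
        ¬ (Gamma n (Rv n M J)).Adj (g a) (g b) := by
      intro a b ha hb hadj
      rw [← hgadj] at hadj
      unfold twoDisjointEdges at hadj
      rw [SimpleGraph.fromRel_adj] at hadj
      rcases ha with rfl | rfl <;> rcases hb with rfl | rfl <;> revert hadj <;> decide
    have h01 : g 0 ≠ g 1 := fun h => by have := hginj h; exact absurd this (by decide)
    have h23 : g 2 ≠ g 3 := fun h => by have := hginj h; exact absurd this (by decide)
    have h02 : g 0 ≠ g 2 := fun h => by have := hginj h; exact absurd this (by decide)
    have h03 : g 0 ≠ g 3 := fun h => by have := hginj h; exact absurd this (by decide)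
    have h12 : g 1 ≠ g 2 := fun h => by have := hginj h; exact absurd this (by decide)
    have h13 : g 1 ≠ g 3 := fun h => by have := hginj h; exact absurd this (by decide)
    rcases adj_sides hA01 with ⟨hs0, hs1⟩ | ⟨hs0, hs1⟩ <;>
      rcases adj_sides hA23 with ⟨hs2, hs3⟩ | ⟨hs2, hs3⟩
    · -- g0∉J, g1∈J, g2∉J, g3∈J : x=g1, x'=g3, y=g0, y'=g2
      exact main_of_config hM hJ hU1 hU2 (hgU 1) (hgU 3) (hgU 0) (hgU 2)
        hs1 hs3 hs0 hs2 h13 h02 hA01 hA23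
        (hN 0 3 (Or.inl rfl) (Or.inr rfl))
    · -- g0∉J, g1∈J, g2∈J, g3∉J : x=g1, x'=g2, y=g0, y'=g3
      exact main_of_config hM hJ hU1 hU2 (hgU 1) (hgU 2) (hgU 0) (hgU 3)
        hs1 hs2 hs0 hs3 h12 h03 hA01 hA23.symm
        (hN 0 2 (Or.inl rfl) (Or.inl rfl))
    · -- g0∈J, g1∉J, g2∉J, g3∈J : x=g0, x'=g3, y=g1, y'=g2
      exact main_of_config hM hJ hU1 hU2 (hgU 0) (hgU 3) (hgU 1) (hgU 2)
        hs0 hs3 hs1 hs2 h03 h12 hA01.symm hA23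
        (hN 1 3 (Or.inr rfl) (Or.inr rfl))
    · -- g0∈J, g1∉J, g2∈J, g3∉J : x=g0, x'=g2, y=g1, y'=g3
      exact main_of_config hM hJ hU1 hU2 (hgU 0) (hgU 2) (hgU 1) (hgU 3)
        hs0 hs2 hs1 hs3 h02 h13 hA01.symm hA23.symm
        (hN 1 2 (Or.inr rfl) (Or.inl rfl))
  · -- path graph
    obtain ⟨e⟩ := he
    obtain ⟨g, hginj, hgU, hgadj⟩ := induce_iso_config e
    have hA01 : (Gamma n (Rv n M J)).Adj (g 0) (g 1) := by
      rw [← hgadj, SimpleGraph.pathGraph_adj]; decide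
    have hA12 : (Gamma n (Rv n M J)).Adj (g 1) (g 2) := by
      rw [← hgadj, SimpleGraph.pathGraph_adj]; decide
    have hA23 : (Gamma n (Rv n M J)).Adj (g 2) (g 3) := by
      rw [← hgadj, SimpleGraph.pathGraph_adj]; decide
    have hN03 : ¬ (Gamma n (Rv n M J)).Adj (g 0) (g 3) := by
      rw [← hgadj, SimpleGraph.pathGraph_adj]; decide
    have h02 : g 0 ≠ g 2 := fun h => by have := hginj h; exact absurd this (by decide)
    have h03 : g 0 ≠ g 3 := fun h => by have := hginj h; exact absurd this (by decide)
    have h13 : g 1 ≠ g 3 := fun h => by have := hginj h; exact absurd this (by decide)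
    rcases adj_sides hA01 with ⟨hs0, hs1⟩ | ⟨hs0, hs1⟩
    · -- g0∉J, g1∈J
      have hs2 : g 2 ∉ J := by
        rcases adj_sides hA12 with ⟨h, _⟩ | ⟨_, h⟩
        · exact absurd hs1 h
        · exact h
      have hs3 : g 3 ∈ J := by
        rcases adj_sides hA23 with ⟨_, h⟩ | ⟨h, _⟩
        · exact h
        · exact absurd h hs2
      -- x=g1, x'=g3, y=g0, y'=g2
      exact main_of_config hM hJ hU1 hU2 (hgU 1) (hgU 3) (hgU 0) (hgU 2)
        hs1 hs3 hs0 hs2 h13 h02 hA01 hA23 hN03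
    · -- g0∈J, g1∉J
      have hs2 : g 2 ∈ J := by
        rcases adj_sides hA12 with ⟨_, h⟩ | ⟨h, _⟩
        · exact h
        · exact absurd h hs1
      have hs3 : g 3 ∉ J := by
        rcases adj_sides hA23 with ⟨h, _⟩ | ⟨_, h⟩
        · exact absurd hs2 h
        · exact h
      -- x=g2, x'=g0, y=g3, y'=g1
      exact main_of_config hM hJ hU1 hU2 (hgU 2) (hgU 0) (hgU 3) (hgU 1)
        hs2 hs0 hs3 hs1 (Ne.symm h02) (Ne.symm h13) hA23.symm hA01.symm
        (fun h => hN03 h.symm)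
end

section
/- Every face of the matroid polytope Δ_M of a matroid M of rank k on a finite set S is itself the matroid polytope of some matroid of rank k on S. -/
open Finset Module

/-!
The face of `conv {δ_I | I ∈ M}` exposed by a functional `l` is the convex hull of the vertices
maximizing `l`, that is of the `δ_I` for the bases `I` of maximal weight `∑ i ∈ I, l (e_i)`.
These bases form a matroid: for two of them and `i ∈ I \ J`, symmetric basis exchange gives
`j ∈ J \ I` with both `I - i + j` and `J - j + i` bases; neither can weigh more than `I`, resp. `J`,
so `w i = w j` and `I - i + j` again has maximal weight.
-/

theorem Matroid.IsBase.exists_symm_exchange_s11 {α : Type*} {M : Matroid α} {B₁ B₂ : Set α} {e : α}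
    (hB₁ : M.IsBase B₁) (hB₂ : M.IsBase B₂) (he : e ∈ B₁ \ B₂) :
    ∃ f ∈ B₂ \ B₁, M.IsBase (insert f B₁ \ {e}) ∧ M.IsBase (insert e B₂ \ {f}) := by
  have hC := hB₂.fundCircuit_isCircuit (hB₁.subset_ground he.1) he.2
  have hK := fundCocircuit_isCocircuit he.1 hB₁
  obtain ⟨f, ⟨hfC, hfK⟩, hfe⟩ := (hC.isCocircuit_inter_nontrivial hK
    ⟨e, M.mem_fundCircuit e B₂, M.mem_fundCocircuit e B₁⟩).exists_ne e
  have hfB₂ : f ∈ B₂ := (M.fundCircuit_subset_insert e B₂ hfC).resolve_left hfe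
  have hfB₁ : f ∉ B₁ := fun hf => hfe ((M.fundCocircuit_inter_eq he.1).subset ⟨hfK, hf⟩)
  rw [hB₁.mem_fundCocircuit_iff_mem_fundCircuit,
    hB₁.indep.mem_fundCircuit_iff (by rw [hB₁.closure_eq]; exact hB₂.subset_ground hfB₂) hfB₁]
    at hfK
  rw [hB₂.indep.mem_fundCircuit_iff (by rw [hB₂.closure_eq]; exact hB₁.subset_ground he.1) he.2]
    at hfC
  exact ⟨f, ⟨hfB₂, hfB₁⟩, hB₁.exchange_isBase_of_indep' he.1 hfB₁ hfK,
    hB₂.exchange_isBase_of_indep' hfB₂ he.2 hfC⟩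

theorem ContinuousLinearMap.toExposed_convexHull {𝕜 E : Type*} [Field 𝕜] [LinearOrder 𝕜]
    [IsStrictOrderedRing 𝕜] [TopologicalSpace 𝕜] [AddCommGroup E] [TopologicalSpace E]
    [Module 𝕜 E] (l : StrongDual 𝕜 E) (s : Set E) :
    l.toExposed (convexHull 𝕜 s) = convexHull 𝕜 (l.toExposed s) := by
  apply Set.Subset.antisymm
  · rintro x ⟨hx, hmax⟩
    obtain ⟨ι, _, w, z, hw₀, hw₁, hzs, rfl⟩ := mem_convexHull_iff_exists_fintype.1 hx
    have hz_le : ∀ i, l (z i) ≤ l (∑ j, w j • z j) :=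
      fun i => hmax _ (subset_convexHull 𝕜 s (hzs i))
    -- `l x` is a convex combination of the values `l (z i) ≤ l x`, so each `z i` of positive
    -- weight attains it.
    have hgap : ∑ i, w i * (l (∑ j, w j • z j) - l (z i)) = 0 := by
      simp only [mul_sub, Finset.sum_sub_distrib, ← Finset.sum_mul, hw₁, one_mul, map_sum,
        map_smul, smul_eq_mul, sub_self]
    have hz_max : ∀ i, w i ≠ 0 → z i ∈ l.toExposed s := by
      intro i hwi
      have hterm := (Finset.sum_eq_zero_iff_of_nonneg fun j _ =>
        mul_nonneg (hw₀ j) (sub_nonneg.2 (hz_le j))).1 hgap i (Finset.mem_univ i)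
      have hzi : l (z i) = l (∑ j, w j • z j) :=
        (sub_eq_zero.1 ((mul_eq_zero.1 hterm).resolve_left hwi)).symm
      exact ⟨hzs i, fun y hy => hzi ▸ hmax y (subset_convexHull 𝕜 s hy)⟩
    classical
    rw [← Finset.centerMass_eq_of_sum_1 _ _ hw₁, ← Finset.centerMass_filter_ne_zero]
    refine Finset.centerMass_mem_convexHull _ (fun i _ => hw₀ i) ?_ fun i hi => ?_
    · rw [Finset.sum_filter_ne_zero, hw₁]
      exact one_pos
    · exact hz_max i (Finset.mem_filter.1 hi).2
  · intro x hx
    obtain ⟨x₀, hx₀s, hx₀max⟩ := convexHull_nonempty_iff.1 ⟨x, hx⟩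
    have hs_le : convexHull 𝕜 s ⊆ {y | l y ≤ l x₀} :=
      convexHull_min hx₀max (convex_halfSpace_le l.toLinearMap.isLinear _)
    have hx_ge : l x₀ ≤ l x :=
      convexHull_min (fun y hy => hy.2 x₀ hx₀s) (convex_halfSpace_ge l.toLinearMap.isLinear _) hx
    exact ⟨convexHull_mono (fun y hy => hy.1) hx, fun y hy => (hs_le hy).trans hx_ge⟩

noncomputable def maxWeightBases {S : Type} (M : Finset (Finset S)) (w : S → ℝ) :
    Finset (Finset S) :=
  {I ∈ M | ∀ J ∈ M, ∑ j ∈ J, w j ≤ ∑ i ∈ I, w i}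

theorem mem_maxWeightBases {S : Type} {M : Finset (Finset S)} {w : S → ℝ} {I : Finset S} :
    I ∈ maxWeightBases M w ↔ I ∈ M ∧ ∀ J ∈ M, ∑ j ∈ J, w j ≤ ∑ i ∈ I, w i :=
  mem_filter

section

variable {S : Type} [DecidableEq S] {k : ℕ} {M : Finset (Finset S)}

def IsMatroid.toMatroid_s11 (hM : IsMatroid k M) : Matroid S :=
  Matroid.ofExistsFiniteIsBase Set.univ (fun B => ∃ A ∈ M, (A : Set S) = B)
    (let ⟨A, hA⟩ := hM.1; ⟨A, ⟨A, hA, rfl⟩, A.finite_toSet⟩)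
    (by
      rintro _ _ ⟨I, hI, rfl⟩ ⟨J, hJ, rfl⟩ i hi
      obtain ⟨j, hj, hjI⟩ := hM.2.2 I hI J hJ (by rintro rfl; exact hi.2 hi.1) i (by simpa using hi)
      exact ⟨j, by simpa using hj, _, hjI, by simp⟩)
    (fun _ _ => Set.subset_univ _)

theorem IsMatroid.toMatroid_isBase_coe_iff (hM : IsMatroid k M) (A : Finset S) :
    hM.toMatroid_s11.IsBase A ↔ A ∈ M := by
  change (∃ A' ∈ M, (A' : Set S) = A) ↔ A ∈ M
  simp only [Finset.coe_inj, exists_eq_right]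

theorem IsMatroid.exists_symm_exchange_s11 (hM : IsMatroid k M) {I J : Finset S} (hI : I ∈ M)
    (hJ : J ∈ M) {i : S} (hi : i ∈ I \ J) :
    ∃ j ∈ J \ I, insert j (I.erase i) ∈ M ∧ insert i (J.erase j) ∈ M := by
  rw [← hM.toMatroid_isBase_coe_iff] at hI hJ
  obtain ⟨j, hj, hIj, hJi⟩ := hI.exists_symm_exchange_s11 hJ (by simpa using hi)
  have hji : j ≠ i := by rintro rfl; exact hj.2 (Finset.mem_sdiff.1 hi).1
  rw [← Set.insert_sdiff_singleton_comm hji, ← Finset.coe_erase, ← Finset.coe_insert,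
    hM.toMatroid_isBase_coe_iff] at hIj
  rw [← Set.insert_sdiff_singleton_comm hji.symm, ← Finset.coe_erase, ← Finset.coe_insert,
    hM.toMatroid_isBase_coe_iff] at hJi
  exact ⟨j, by simpa using hj, hIj, hJi⟩

theorem Finset.sum_insert_erase_eq (w : S → ℝ) {A : Finset S} {a b : S} (ha : a ∈ A)
    (hb : b ∉ A) : ∑ s ∈ insert b (A.erase a), w s = ∑ s ∈ A, w s - w a + w b := by
  rw [sum_insert fun h => hb (mem_of_mem_erase h), sum_erase_eq_sub ha]
  ring

theorem IsMatroid.maxWeightBases (hM : IsMatroid k M) (w : S → ℝ) :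
    IsMatroid k (maxWeightBases M w) := by
  refine ⟨?_, fun I hI => hM.2.1 I (mem_maxWeightBases.1 hI).1, ?_⟩
  · obtain ⟨I, hI, hmax⟩ := M.exists_max_image (fun I => ∑ i ∈ I, w i) hM.1
    exact ⟨I, mem_maxWeightBases.2 ⟨hI, hmax⟩⟩
  intro I hI J hJ _ i hi
  obtain ⟨hIM, hImax⟩ := mem_maxWeightBases.1 hI
  obtain ⟨hJM, hJmax⟩ := mem_maxWeightBases.1 hJ
  obtain ⟨j, hj, hIj, hJi⟩ := hM.exists_symm_exchange_s11 hIM hJM hi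
  rw [mem_sdiff] at hi hj
  have hI_le := hImax _ hIj
  have hJ_le := hJmax _ hJi
  rw [sum_insert_erase_eq w hi.1 hj.2] at hI_le
  rw [sum_insert_erase_eq w hj.1 hi.2] at hJ_le
  refine ⟨j, mem_sdiff.2 hj, mem_maxWeightBases.2 ⟨hIj, fun K hK => ?_⟩⟩
  rw [sum_insert_erase_eq w hi.1 hj.2]
  linarith [hImax K hK]

theorem delta_eq_sum_single (B : Finset S) : delta B = ∑ i ∈ B, Pi.single i (1 : ℝ) := by
  ext x
  simp [delta, Finset.sum_apply, Pi.single_apply]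

theorem toExposed_image_delta (l : StrongDual ℝ (S → ℝ)) (M : Finset (Finset S)) :
    l.toExposed (delta '' M) = delta '' (maxWeightBases M fun i => l (Pi.single i 1) : Set _) := by
  have hl : ∀ B : Finset S, l (delta B) = ∑ i ∈ B, l (Pi.single i 1) := fun B => by
    rw [delta_eq_sum_single, map_sum]
  ext x
  constructor
  · rintro ⟨⟨I, hI, rfl⟩, hmax⟩
    refine ⟨I, mem_maxWeightBases.2 ⟨hI, fun J hJ => ?_⟩, rfl⟩
    simpa only [hl] using hmax _ ⟨J, hJ, rfl⟩
  · rintro ⟨I, hI, rfl⟩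
    obtain ⟨hIM, hmax⟩ := mem_maxWeightBases.1 hI
    refine ⟨⟨I, hIM, rfl⟩, ?_⟩
    rintro _ ⟨J, hJ, rfl⟩
    simpa only [hl] using hmax J hJ

end

theorem face_of_matroid_polytope_is_matroid_polytope_general
    (S : Type) [DecidableEq S] (k : ℕ)
    (M : Finset (Finset S)) (hM : IsMatroid k M)
    (F : Set (S → ℝ)) (hF : IsExposed ℝ (matroidPolytope M) F) (hFne : F.Nonempty) :
    ∃ M' : Finset (Finset S), IsMatroid k M' ∧ F = matroidPolytope M' := by
  obtain ⟨l, rfl⟩ := hF hFne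
  refine ⟨maxWeightBases M fun i => l (Pi.single i 1), hM.maxWeightBases _, ?_⟩
  exact (l.toExposed_convexHull _).trans (congrArg (convexHull ℝ) (toExposed_image_delta l M))

/-- Every (nonempty) face of the matroid polytope of a matroid of rank `k` on `S` is itself
the matroid polytope of some matroid of rank `k` on `S`. -/
theorem face_of_matroid_polytope_is_matroid_polytope
    (S : Type) [Fintype S] [DecidableEq S] (k : ℕ)
    (M : Finset (Finset S)) (hM : IsMatroid k M)
    (F : Set (S → ℝ)) (hF : IsExposed ℝ (matroidPolytope M) F) (hFne : F.Nonempty) :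
    ∃ M' : Finset (Finset S), IsMatroid k M' ∧ F = matroidPolytope M' :=
  face_of_matroid_polytope_is_matroid_polytope_general S k M hM F hF hFne
end

section
/- Let A be an n×k complex matrix of rank k with rows α_1,…,α_n ∈ ℂ^k, let (J_1, J_2) be a partition of [n], and let k = k_1 + k_2 with k_1, k_2 ≥ 0. Suppose that every k-element subset B ⊆ [n] for which the rows {α_b : b ∈ B} are linearly independent satisfies |B ∩ J_1| = k_1 (and hence |B ∩ J_2| = k_2). Let V_1 be the linear span of {α_b : b ∈ J_1} and V_2 the linear span of {α_b : b ∈ J_2}. Then dim V_1 = k_1, dim V_2 = k_2, and ℂ^k = V_1 ⊕ V_2. -/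
open Module

/-!
Choose a maximal linearly independent set of rows inside `J₁` and extend it to a basis `B` of
`ℂ^k` made of rows. The hypothesis gives `|B ∩ J₁| = k₁`, and the rows in `B ∩ J₁` already span
`V₁`, so `dim V₁ ≤ k₁`; likewise `dim V₂ ≤ k₂`. Since `V₁ + V₂ = ℂ^k` has dimension
`k = k₁ + k₂`, both bounds are equalities and `V₁ ∩ V₂ = 0`.
-/

open Submodule Set

section RowSelection

variable {ι K V : Type*} [DivisionRing K] [AddCommGroup V] [Module K V]

theorem exists_linearIndepOn_span_eq_of_subset_span_inter (v : ι → V) (J : Set ι) :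
    ∃ B : Set ι, LinearIndepOn K v B ∧ span K (v '' B) = span K (range v) ∧
      v '' J ⊆ span K (v '' (B ∩ J)) := by
  obtain ⟨s, hsJ, -, hJs, hs⟩ := exists_linearIndepOn_extension (linearIndepOn_empty K v)
    (empty_subset J)
  obtain ⟨B, -, hsB, hB, hBli⟩ := exists_linearIndepOn_extension hs (subset_univ s)
  refine ⟨B, hBli, le_antisymm (span_mono (image_subset_range v B)) ?_, ?_⟩
  · rwa [span_le, ← image_univ]
  · exact hJs.trans (span_mono (image_mono (subset_inter hsB hsJ)))

theorem finrank_span_image_le_of_forall_card_inter_eq [Fintype ι] [DecidableEq ι] {v : ι → V}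
    {J : Finset ι} {m : ℕ} (hspan : span K (range v) = ⊤)
    (hJ : ∀ B : Finset ι, B.card = finrank K V → LinearIndepOn K v (B : Set ι) →
      (B ∩ J).card = m) :
    finrank K (span K (v '' J)) ≤ m := by
  classical
  obtain ⟨B, hBli, hBspan, hJB⟩ :=
    exists_linearIndepOn_span_eq_of_subset_span_inter (K := K) v (J : Set ι)
  lift B to Finset ι using B.toFinite
  have hcard : B.card = finrank K V := by
    rw [← finrank_top, ← hspan, ← hBspan, image_eq_range, finrank_span_eq_card hBli]
    simp
  rw [← Finset.coe_inter, ← Finset.coe_image (s := B ∩ J)] at hJB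
  calc finrank K (span K (v '' J))
      ≤ finrank K (span K (((B ∩ J).image v : Finset V) : Set V)) :=
        Submodule.finrank_mono (span_le.2 hJB)
    _ ≤ (B ∩ J).card := (finrank_span_finset_le_card _).trans Finset.card_image_le
    _ = m := hJ B hcard hBli

end RowSelection

theorem Submodule.finrank_eq_and_isCompl_of_sup_eq_top {K V : Type*} [DivisionRing K]
    [AddCommGroup V] [Module K V] [FiniteDimensional K V] {p q : Submodule K V} {a b : ℕ}
    (hsup : p ⊔ q = ⊤) (hp : finrank K p ≤ a) (hq : finrank K q ≤ b)
    (hab : a + b = finrank K V) :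
    finrank K p = a ∧ finrank K q = b ∧ IsCompl p q := by
  have hdim := finrank_sup_add_finrank_inf_eq p q
  rw [hsup, finrank_top] at hdim
  have hinf : finrank K ↥(p ⊓ q) = 0 := by omega
  exact ⟨by omega, by omega, disjoint_iff.2 (finrank_eq_zero.1 hinf), codisjoint_iff.2 hsup⟩

/-- **The key claim in the proof of Lemma 2.4.** Let `A` be an `n × k` complex matrix of rank
`k` (its rows `α_1, …, α_n` span `ℂ^k`), let `(J_1, J_2)` be a partition of `[n]` and
`k = k_1 + k_2`. Suppose every `k`-element subset `B ⊆ [n]` whose corresponding rows are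
linearly independent satisfies `|B ∩ J_1| = k_1`. Then the span `V_1` of the rows indexed by
`J_1` and the span `V_2` of the rows indexed by `J_2` satisfy `dim V_1 = k_1`, `dim V_2 = k_2`
and `ℂ^k = V_1 ⊕ V_2`. -/
theorem row_spans_direct_sum
    (n k k1 k2 : ℕ) (hk : k = k1 + k2)
    (A : Matrix (Fin n) (Fin k) ℂ)
    (hrank : Submodule.span ℂ (Set.range fun i : Fin n => A i) = ⊤)
    (J1 J2 : Finset (Fin n)) (hunion : J1 ∪ J2 = Finset.univ) (hdisj : Disjoint J1 J2)
    (hB : ∀ B : Finset (Fin n), B.card = k →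
      LinearIndependent ℂ (fun b : {x : Fin n // x ∈ B} => A b.1) →
      (B ∩ J1).card = k1) :
    finrank ℂ (Submodule.span ℂ ((fun i : Fin n => A i) '' (J1 : Set (Fin n)))) = k1 ∧
    finrank ℂ (Submodule.span ℂ ((fun i : Fin n => A i) '' (J2 : Set (Fin n)))) = k2 ∧
    IsCompl (Submodule.span ℂ ((fun i : Fin n => A i) '' (J1 : Set (Fin n))))
      (Submodule.span ℂ ((fun i : Fin n => A i) '' (J2 : Set (Fin n)))) := by
  have hsup : span ℂ ((fun i : Fin n => A i) '' (J1 : Set (Fin n))) ⊔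
      span ℂ ((fun i : Fin n => A i) '' (J2 : Set (Fin n))) = ⊤ := by
    rw [← span_union, ← image_union, ← Finset.coe_union, hunion, Finset.coe_univ, image_univ,
      hrank]
  obtain rfl : J2 = J1ᶜ :=
    (IsCompl.compl_eq ⟨hdisj, codisjoint_iff.2 (by simpa using hunion)⟩).symm
  have h1 := finrank_span_image_le_of_forall_card_inter_eq hrank
    fun B hcard hli => hB B (by simpa using hcard) hli
  have h2 := finrank_span_image_le_of_forall_card_inter_eq (J := J1ᶜ) (m := k2) hrank
    fun B hcard hli => by
      have hcard : B.card = k := by simpa using hcard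
      have hsplit := Finset.card_inter_add_card_sdiff B J1
      have hJ1 := hB B hcard hli
      rw [← Finset.sdiff_eq_inter_compl]
      omega
  exact finrank_eq_and_isCompl_of_sup_eq_top hsup h1 h2 (by simp [hk])
end
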